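/- arXiv:0809.0702 — 4 statements merged into one kernel-verified Lean document; each statement's English description precedes it below -/
import Mathlib

section
/- Let Q be a path and (Z₁, Z₂) a nontrivial (Q, r)-scheme with |Z₁| = 1 and |Z₂| ≥ 2. Then |V(Q)| ≥ 2|Z₂| + r − 3. -/
open SimpleGraph

private lemma pathGraph_walk_aux {n : ℕ} :
    ∀ (d : ℕ) (x y : Fin n), x.val + d = y.val →
      ∃ w : (pathGraph n).Walk x y, w.length = d := by
  intro d
  induction d with
  | zero =>
    intro x y h
    have : x = y := Fin.ext (by omega)
    subst this
    exact ⟨Walk.nil, rfl⟩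
  | succ d ih =>
    intro x y h
    have hx1 : x.val + 1 < n := by have := y.isLt; omega
    set x' : Fin n := ⟨x.val + 1, hx1⟩ with hx'
    have hadj : (pathGraph n).Adj x x' := by
      rw [pathGraph_adj]; left; rfl
    obtain ⟨w, hw⟩ := ih x' y (by simp [hx']; omega)
    exact ⟨Walk.cons hadj w, by simp [hw]⟩

private lemma pathGraph_dist_le {n : ℕ} (x y : Fin n) :
    (pathGraph n).dist x y ≤ Nat.dist x.val y.val := by
  rcases le_total x.val y.val with h | h
  · obtain ⟨w, hw⟩ := pathGraph_walk_aux (y.val - x.val) x y (by omega)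
    have := SimpleGraph.dist_le w
    rw [hw] at this
    simp only [Nat.dist]
    omega
  · obtain ⟨w, hw⟩ := pathGraph_walk_aux (x.val - y.val) y x (by omega)
    have := SimpleGraph.dist_le w
    rw [hw, SimpleGraph.dist_comm] at this
    simp only [Nat.dist]
    omega

/-- A set of naturals whose elements are pairwise at distance at least 2 spans a
long interval. -/
private lemma sep_span (T : Finset ℕ) (hT : T.Nonempty)
    (h2 : ∀ x ∈ T, ∀ y ∈ T, x ≠ y → 2 ≤ Nat.dist x y) :
    T.min' hT + 2 * (T.card - 1) ≤ T.max' hT := by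
  classical
  set f : ℕ → Finset ℕ := fun x => {x, x + 1} with hf
  have hdisj : ∀ x ∈ T, ∀ y ∈ T, x ≠ y → Disjoint (f x) (f y) := by
    intro x hx y hy hxy
    have hd := h2 x hx y hy hxy
    simp only [Nat.dist] at hd
    simp only [hf, Finset.disjoint_left, Finset.mem_insert, Finset.mem_singleton]
    omega
  have hcard : (T.biUnion f).card = 2 * T.card := by
    rw [Finset.card_biUnion hdisj]
    have : ∀ x ∈ T, (f x).card = 2 := by
      intro x _
      simp [hf, Finset.card_insert_of_notMem]
    rw [Finset.sum_congr rfl this, Finset.sum_const, smul_eq_mul]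
    ring
  have hsub : T.biUnion f ⊆ Finset.Icc (T.min' hT) (T.max' hT + 1) := by
    intro z hz
    simp only [Finset.mem_biUnion, hf, Finset.mem_insert, Finset.mem_singleton] at hz
    obtain ⟨x, hx, hzx⟩ := hz
    have h1 := T.min'_le x hx
    have h2 := T.le_max' x hx
    simp only [Finset.mem_Icc]
    omega
  have hle := Finset.card_le_card hsub
  rw [hcard, Nat.card_Icc] at hle
  have hmm := T.min'_le _ (T.max'_mem hT)
  have hpos : 1 ≤ T.card := Finset.card_pos.mpr hT
  omega

/-- If `(Z₁, Z₂)` is a nontrivial `(Q, r)`-scheme on a path `Q` with `n` vertices,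
`|Z₁| = 1` and `|Z₂| ≥ 2`, then `n ≥ 2|Z₂| + r − 3`. -/
theorem path_scheme_two_singleton (n r : ℕ) (hn : 1 ≤ n) (hr : 2 ≤ r)
    (Z₁ Z₂ : Finset (Fin n)) (hZ1 : Z₁.card = 1) (hZ2 : 2 ≤ Z₂.card)
    (h₁ : ∀ x ∈ Z₁, ∀ y ∈ Z₁, x ≠ y → 2 ≤ (pathGraph n).dist x y)
    (h₂ : ∀ x ∈ Z₂, ∀ y ∈ Z₂, x ≠ y → 2 ≤ (pathGraph n).dist x y)
    (hcross : ∀ x ∈ Z₁, ∀ y ∈ Z₂, x ≠ y → r ≤ (pathGraph n).dist x y)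
    (hsdr : ∃ x₁ ∈ Z₁, ∃ x₂ ∈ Z₂, x₁ ≠ x₂) :
    n ≥ 2 * Z₂.card + r - 3 := by
  classical
  obtain ⟨a, ha⟩ := Finset.card_eq_one.mp hZ1
  set A : ℕ := a.val with hA
  set V : Finset ℕ := Z₂.image Fin.val with hV
  have hVcard : V.card = Z₂.card := Finset.card_image_of_injective _ Fin.val_injective
  -- transfer hypotheses to ℕ
  have hsep : ∀ x ∈ V, ∀ y ∈ V, x ≠ y → 2 ≤ Nat.dist x y := by
    intro x hx y hy hxy
    simp only [hV, Finset.mem_image] at hx hy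
    obtain ⟨u, hu, rfl⟩ := hx
    obtain ⟨v, hv, rfl⟩ := hy
    have huv : u ≠ v := fun h => hxy (by rw [h])
    exact le_trans (h₂ u hu v hv huv) (pathGraph_dist_le u v)
  have hcrossA : ∀ x ∈ V, x ≠ A → r ≤ Nat.dist x A := by
    intro x hx hxA
    simp only [hV, Finset.mem_image] at hx
    obtain ⟨u, hu, rfl⟩ := hx
    have hua : a ≠ u := fun h => hxA (by rw [hA, h])
    have hcr := hcross a (by simp [ha]) u hu hua
    have hle := pathGraph_dist_le a u
    simp only [Nat.dist] at hle ⊢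
    omega
  have hVlt : ∀ x ∈ V, x < n := by
    intro x hx
    simp only [hV, Finset.mem_image] at hx
    obtain ⟨u, _, rfl⟩ := hx
    exact u.isLt
  have hAlt : A < n := a.isLt
  -- split V \ {A} into left and right parts
  set T : Finset ℕ := V.erase A with hT
  set L : Finset ℕ := T.filter (fun x => x < A) with hL
  set R : Finset ℕ := T.filter (fun x => ¬ x < A) with hR
  have hLR : L.card + R.card = T.card := Finset.card_filter_add_card_filter_not _
  have hTcard : V.card ≤ T.card + 1 := by
    have hsub : V ⊆ insert A T := by
      intro x hx
      simp only [Finset.mem_insert, hT, Finset.mem_erase]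
      by_cases h : x = A
      · exact Or.inl h
      · exact Or.inr ⟨h, hx⟩
    calc V.card ≤ (insert A T).card := Finset.card_le_card hsub
      _ ≤ T.card + 1 := Finset.card_insert_le _ _
  have hTsub : T ⊆ V := Finset.erase_subset _ _
  have hLsub : L ⊆ V := (Finset.filter_subset _ _).trans hTsub
  have hRsub : R ⊆ V := (Finset.filter_subset _ _).trans hTsub
  -- right part fact
  have hRfact : R.Nonempty → A + r + 2 * (R.card - 1) ≤ n - 1 := by
    intro hRn
    have hspan := sep_span R hRn (fun x hx y hy => hsep x (hRsub hx) y (hRsub hy))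
    have hmin : A + r ≤ R.min' hRn := by
      obtain ⟨h1, hge⟩ := Finset.mem_filter.mp (R.min'_mem hRn)
      obtain ⟨hne, hmemV⟩ := Finset.mem_erase.mp h1
      have hcr := hcrossA _ hmemV hne
      simp only [Nat.dist] at hcr
      omega
    have hmax : R.max' hRn ≤ n - 1 := by
      have := hVlt _ (hRsub (R.max'_mem hRn))
      omega
    omega
  -- left part fact
  have hLfact : L.Nonempty → 2 * (L.card - 1) + r ≤ A := by
    intro hLn
    have hspan := sep_span L hLn (fun x hx y hy => hsep x (hLsub hx) y (hLsub hy))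
    have hmax : L.max' hLn + r ≤ A := by
      obtain ⟨h1, hlt⟩ := Finset.mem_filter.mp (L.max'_mem hLn)
      obtain ⟨hne, hmemV⟩ := Finset.mem_erase.mp h1
      have hcr := hcrossA _ hmemV hne
      simp only [Nat.dist] at hcr
      omega
    omega
  -- combine
  have hk : Z₂.card ≤ L.card + R.card + 1 := by omega
  rcases Finset.eq_empty_or_nonempty L with hLe | hLn
  · -- L empty, R has at least k-1 elements
    have hRn : R.Nonempty := by
      rw [← Finset.card_pos]
      have : L.card = 0 := by rw [hLe]; simp
      omega
    have := hRfact hRn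
    have : L.card = 0 := by rw [hLe]; simp
    omega
  · rcases Finset.eq_empty_or_nonempty R with hRe | hRn
    · have := hLfact hLn
      have : R.card = 0 := by rw [hRe]; simp
      omega
    · have h1 := hRfact hRn
      have h2 := hLfact hLn
      have hLp : 1 ≤ L.card := Finset.card_pos.mpr hLn
      have hRp : 1 ≤ R.card := Finset.card_pos.mpr hRn
      omega
end

section
/- Let Q be a path and (Z₁, Z₂, Z₃) a nontrivial (Q, r)-scheme with |Z₁| = |Z₂| = 1 and |Z₃| ≥ 3. Then |V(Q)| ≥ 2|Z₃| + 2r − 5. -/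
open SimpleGraph Finset

lemma core_gap (r : ℕ) (hr : 2 ≤ r) (S : Finset ℕ) (hcard : 3 ≤ S.card)
    (a b : ℕ) (ha : a ∈ S) (hb : b ∈ S) (hab : a ≠ b)
    (h2 : ∀ x ∈ S, ∀ y ∈ S, x ≠ y → 2 ≤ |(x : ℤ) - y|)
    (hrr : ∀ x ∈ S, ∀ y ∈ S, x ≠ y → (x = a ∨ x = b ∨ y = a ∨ y = b) →
      (r : ℤ) ≤ |(x : ℤ) - y|) :
    ∃ x ∈ S, ∃ y ∈ S, 2 * (S.card : ℤ) + 2 * r - 6 ≤ (x : ℤ) - y := by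
  classical
  set l := S.sort (· ≤ ·) with hl
  have hlen : l.length = S.card := S.length_sort _
  set m := S.card with hm
  have hm3 : 3 ≤ m := hcard
  have hmem : ∀ i, i < m → l.getD i 0 ∈ S := by
    intro i hi
    rw [List.getD_eq_getElem l 0 (by omega)]
    exact (Finset.mem_sort (α := ℕ) (· ≤ ·)).mp (l.getElem_mem _)
  have hsorted : l.Pairwise (· < ·) := S.sortedLT_sort.pairwise
  have hmono : ∀ i j, i < j → j < m → (l.getD i 0 : ℤ) < l.getD j 0 := by
    intro i j hij hj
    rw [List.getD_eq_getElem l 0 (by omega), List.getD_eq_getElem l 0 (by omega)]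
    exact_mod_cast List.pairwise_iff_get.mp hsorted ⟨i, by omega⟩ ⟨j, by omega⟩ hij
  set f : ℕ → ℤ := fun i => (l.getD i 0 : ℤ) with hf
  have hgap2 : ∀ j, j + 1 < m → 2 ≤ f (j + 1) - f j := by
    intro j hj
    have hlt := hmono j (j + 1) (by omega) hj
    have h := h2 _ (hmem j (by omega)) _ (hmem (j + 1) hj) (by intro h; rw [h] at hlt; omega)
    rw [abs_sub_comm, abs_of_pos (by omega)] at h
    simp only [hf]
    omega
  obtain ⟨ia, hia, hiav⟩ := List.mem_iff_getElem.mp ((Finset.mem_sort (α := ℕ) (· ≤ ·)).mpr ha)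
  obtain ⟨ib, hib, hibv⟩ := List.mem_iff_getElem.mp ((Finset.mem_sort (α := ℕ) (· ≤ ·)).mpr hb)
  have hav : l.getD ia 0 = a := by rw [List.getD_eq_getElem l 0 hia]; exact hiav
  have hbv : l.getD ib 0 = b := by rw [List.getD_eq_getElem l 0 hib]; exact hibv
  rw [hlen] at hia hib
  have hiab : ia ≠ ib := by intro h; apply hab; rw [← hav, ← hbv, h]
  have hgapr : ∀ j, j + 1 < m → (j = ia ∨ j + 1 = ia ∨ j = ib ∨ j + 1 = ib) →
      (r : ℤ) ≤ f (j + 1) - f j := by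
    intro j hj htouch
    have hlt := hmono j (j + 1) (by omega) hj
    have h := hrr _ (hmem j (by omega)) _ (hmem (j + 1) hj)
      (by intro h; rw [h] at hlt; omega)
      (by rcases htouch with h | h | h | h
          · exact Or.inl (by rw [h]; exact hav)
          · exact Or.inr (Or.inr (Or.inl (by rw [h]; exact hav)))
          · exact Or.inr (Or.inl (by rw [h]; exact hbv))
          · exact Or.inr (Or.inr (Or.inr (by rw [h]; exact hbv))))
    rw [abs_sub_comm, abs_of_pos (by omega)] at h
    simp only [hf]
    omega
  set i : ℕ := min ia ib with hi
  set i' : ℕ := max ia ib with hi'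
  have htouch_iff : ∀ j, (j = i ∨ j + 1 = i ∨ j = i' ∨ j + 1 = i') →
      (j = ia ∨ j + 1 = ia ∨ j = ib ∨ j + 1 = ib) := by intro j h; omega
  obtain ⟨j1, j2, hj12, hj1m, hj2m, hT1, hT2⟩ :
      ∃ j1 j2, j1 ≠ j2 ∧ j1 + 1 < m ∧ j2 + 1 < m ∧
        (j1 = i ∨ j1 + 1 = i ∨ j1 = i' ∨ j1 + 1 = i') ∧
        (j2 = i ∨ j2 + 1 = i ∨ j2 = i' ∨ j2 + 1 = i') := by
    by_cases h : i + 1 < i'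
    · exact ⟨i, i' - 1, by omega, by omega, by omega, by omega, by omega⟩
    · by_cases h0 : 0 < i
      · exact ⟨i - 1, i' - 1, by omega, by omega, by omega, by omega, by omega⟩
      · exact ⟨0, 1, by omega, by omega, by omega, by omega, by omega⟩
  have hsum : ∑ j ∈ Finset.range (m - 1), (f (j + 1) - f j) = f (m - 1) - f 0 :=
    Finset.sum_range_sub f (m - 1)
  have hsub : ({j1, j2} : Finset ℕ) ⊆ Finset.range (m - 1) := by
    intro j hj
    simp only [Finset.mem_insert, Finset.mem_singleton] at hj
    rcases hj with h | h <;> simp [h] <;> omega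
  have hsplit : ∑ j ∈ Finset.range (m - 1) \ {j1, j2}, (f (j + 1) - f j) +
      ∑ j ∈ ({j1, j2} : Finset ℕ), (f (j + 1) - f j) =
      ∑ j ∈ Finset.range (m - 1), (f (j + 1) - f j) :=
    Finset.sum_sdiff hsub
  have hpairsum : (2 * r : ℤ) ≤ ∑ j ∈ ({j1, j2} : Finset ℕ), (f (j + 1) - f j) := by
    rw [Finset.sum_pair hj12]
    have h1 := hgapr j1 hj1m (htouch_iff _ hT1)
    have h2' := hgapr j2 hj2m (htouch_iff _ hT2)
    omega
  have hcard' : (Finset.range (m - 1) \ {j1, j2}).card = m - 3 := by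
    rw [Finset.card_sdiff_of_subset hsub, Finset.card_range, Finset.card_pair hj12]; omega
  have hrest : ∀ j ∈ Finset.range (m - 1) \ {j1, j2}, (2 : ℤ) ≤ f (j + 1) - f j := by
    intro j hj
    simp only [Finset.mem_sdiff, Finset.mem_range] at hj
    exact hgap2 j (by omega)
  have hrestsum := Finset.card_nsmul_le_sum _ _ _ hrest
  rw [hcard', nsmul_eq_mul] at hrestsum
  refine ⟨l.getD (m - 1) 0, hmem _ (by omega), l.getD 0 0, hmem 0 (by omega), ?_⟩
  have hcast : ((m - 3 : ℕ) : ℤ) = (m : ℤ) - 3 := by omega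
  show 2 * (m : ℤ) + 2 * r - 6 ≤ f (m - 1) - f 0
  rw [hcast] at hrestsum
  linarith [hsum, hsplit, hpairsum, hrestsum]

lemma pathGraph_dist_le' {n : ℕ} (u v : Fin n) :
    (((pathGraph n).dist u v : ℤ)) ≤ |(u.val : ℤ) - v.val| := by
  have W : ∀ (d : ℕ) (u v : Fin n), v.val = u.val + d →
      ∃ w : (pathGraph n).Walk u v, w.length = d := by
    intro d
    induction d with
    | zero => intro u v h; have : u = v := Fin.ext (by omega); subst this; exact ⟨Walk.nil, rfl⟩
    | succ d ih =>
      intro u v h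
      have hlt : u.val + 1 < n := by have := v.isLt; omega
      have hadj : (pathGraph n).Adj u ⟨u.val + 1, hlt⟩ := pathGraph_adj.mpr (Or.inl rfl)
      obtain ⟨w, hw⟩ := ih ⟨u.val + 1, hlt⟩ v (by simp; omega)
      exact ⟨Walk.cons hadj w, by simp [hw]⟩
  rcases le_total u.val v.val with h | h
  · obtain ⟨w, hw⟩ := W (v.val - u.val) u v (by omega)
    have := (SimpleGraph.dist_le w).trans_eq hw
    rw [abs_sub_comm, abs_of_nonneg (by push_cast; omega)]
    push_cast
    omega
  · obtain ⟨w, hw⟩ := W (u.val - v.val) v u (by omega)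
    have := (SimpleGraph.dist_le w).trans_eq hw
    rw [SimpleGraph.dist_comm] at this
    rw [abs_of_nonneg (by push_cast; omega)]
    push_cast
    omega

/-- If `(Z 0, Z 1, Z 2)` is a nontrivial `(Q, r)`-scheme on a path `Q` with `n`
vertices, `|Z 0| = |Z 1| = 1` and `|Z 2| ≥ 3`, then `n ≥ 2|Z 2| + 2r − 5`. -/
theorem path_scheme_three_singletons (n r : ℕ) (hn : 1 ≤ n) (hr : 2 ≤ r)
    (Z : Fin 3 → Finset (Fin n)) (hZ1 : (Z 0).card = 1) (hZ2 : (Z 1).card = 1)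
    (hZ3 : 3 ≤ (Z 2).card)
    (hsame : ∀ i, ∀ x ∈ Z i, ∀ y ∈ Z i, x ≠ y → 2 ≤ (pathGraph n).dist x y)
    (hcross : ∀ i j, i ≠ j → ∀ x ∈ Z i, ∀ y ∈ Z j, x ≠ y →
      r ≤ (pathGraph n).dist x y)
    (hsdr : ∃ ξ : Fin 3 → Fin n, Function.Injective ξ ∧ ∀ i, ξ i ∈ Z i) :
    n ≥ 2 * (Z 2).card + 2 * r - 5 := by
  classical
  obtain ⟨ξ, hinj, hmemξ⟩ := hsdr
  set a : Fin n := ξ 0 with hadef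
  set b : Fin n := ξ 1 with hbdef
  have hab : a ≠ b := fun h => absurd (hinj h) (by decide)
  set T : Finset (Fin n) := insert a (insert b (Z 2)) with hT
  have hmemT : ∀ u ∈ T, u = a ∨ u = b ∨ u ∈ Z 2 := by
    intro u hu
    simpa [hT, Finset.mem_insert] using hu
  -- r-distance for pairs touching a or b
  have hda : ∀ w ∈ T, w ≠ a → r ≤ (pathGraph n).dist a w := by
    intro w hw hwa
    rcases hmemT w hw with h | h | h
    · exact absurd h hwa
    · exact h ▸ hcross 0 1 (by decide) a (hmemξ 0) b (hmemξ 1) hab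
    · exact hcross 0 2 (by decide) a (hmemξ 0) w h (Ne.symm hwa)
  have hdb : ∀ w ∈ T, w ≠ b → r ≤ (pathGraph n).dist b w := by
    intro w hw hwb
    rcases hmemT w hw with h | h | h
    · exact h ▸ hcross 1 0 (by decide) b (hmemξ 1) a (hmemξ 0) hab.symm
    · exact absurd h hwb
    · exact hcross 1 2 (by decide) b (hmemξ 1) w h (Ne.symm hwb)
  have hrd : ∀ u ∈ T, ∀ v ∈ T, u ≠ v → (u = a ∨ u = b ∨ v = a ∨ v = b) →
      r ≤ (pathGraph n).dist u v := by
    intro u hu v hv huv hor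
    rcases hor with h | h | h | h
    · exact h ▸ hda v hv (by rw [← h]; exact huv.symm)
    · exact h ▸ hdb v hv (by rw [← h]; exact huv.symm)
    · rw [SimpleGraph.dist_comm]; exact h ▸ hda u hu (by rw [← h]; exact huv)
    · rw [SimpleGraph.dist_comm]; exact h ▸ hdb u hu (by rw [← h]; exact huv)
  have h2d : ∀ u ∈ T, ∀ v ∈ T, u ≠ v → 2 ≤ (pathGraph n).dist u v := by
    intro u hu v hv huv
    rcases hmemT u hu with h | h | h
    · exact hr.trans (hrd u hu v hv huv (Or.inl h))
    · exact hr.trans (hrd u hu v hv huv (Or.inr (Or.inl h)))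
    · rcases hmemT v hv with h' | h' | h'
      · exact hr.trans (hrd u hu v hv huv (Or.inr (Or.inr (Or.inl h'))))
      · exact hr.trans (hrd u hu v hv huv (Or.inr (Or.inr (Or.inr h'))))
      · exact hsame 2 u h v h' huv
  -- move to ℕ
  set S : Finset ℕ := T.image Fin.val with hS
  have hvalinj : Function.Injective (Fin.val : Fin n → ℕ) := Fin.val_injective
  have hScard : S.card = T.card := Finset.card_image_of_injective T hvalinj
  have hcardT : (Z 2).card ≤ T.card :=
    Finset.card_le_card (by intro x hx; simp [hT, Finset.mem_insert, hx])
  have hScard3 : 3 ≤ S.card := by omega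
  have hmemS : ∀ x ∈ S, ∃ u ∈ T, u.val = x := by
    intro x hx; simpa [hS] using hx
  have haS : a.val ∈ S := Finset.mem_image_of_mem _ (by simp [hT])
  have hbS : b.val ∈ S := Finset.mem_image_of_mem _ (by simp [hT])
  have habS : a.val ≠ b.val := fun h => hab (hvalinj h)
  have key := core_gap r hr S hScard3 a.val b.val haS hbS habS ?_ ?_
  · obtain ⟨x, hx, y, hy, hxy⟩ := key
    obtain ⟨u, _, hux⟩ := hmemS x hx
    obtain ⟨v, _, hvy⟩ := hmemS y hy
    have hxn : x < n := hux ▸ u.isLt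
    have hyn : y < n := hvy ▸ v.isLt
    omega
  · intro x hx y hy hxy
    obtain ⟨u, hu, hux⟩ := hmemS x hx
    obtain ⟨v, hv, hvy⟩ := hmemS y hy
    have huv : u ≠ v := fun h => hxy (by rw [← hux, ← hvy, h])
    have := h2d u hu v hv huv
    calc (2 : ℤ) ≤ ((pathGraph n).dist u v : ℤ) := by exact_mod_cast this
    _ ≤ |(u.val : ℤ) - v.val| := pathGraph_dist_le' u v
    _ = |(x : ℤ) - y| := by rw [hux, hvy]
  · intro x hx y hy hxy hor
    obtain ⟨u, hu, hux⟩ := hmemS x hx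
    obtain ⟨v, hv, hvy⟩ := hmemS y hy
    have huv : u ≠ v := fun h => hxy (by rw [← hux, ← hvy, h])
    have hor' : u = a ∨ u = b ∨ v = a ∨ v = b := by
      rcases hor with h | h | h | h
      · exact Or.inl (hvalinj (hux.trans h))
      · exact Or.inr (Or.inl (hvalinj (hux.trans h)))
      · exact Or.inr (Or.inr (Or.inl (hvalinj (hvy.trans h))))
      · exact Or.inr (Or.inr (Or.inr (hvalinj (hvy.trans h))))
    have := hrd u hu v hv huv hor'
    calc (r : ℤ) ≤ ((pathGraph n).dist u v : ℤ) := by exact_mod_cast this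
    _ ≤ |(u.val : ℤ) - v.val| := pathGraph_dist_le' u v
    _ = |(x : ℤ) - y| := by rw [hux, hvy]
end

section
/- If G is a graph with minimum degree δ > 3κ/2 − 1, then no endfragment of G contains a vertex v with κ(G − v) = κ − 1. -/
/-- A set `S` of vertices is a cut-set of `G` if deleting it leaves a graph that is
disconnected or has at most one vertex. -/
def SimpleGraph.IsCutSet {V : Type*} [Fintype V] (G : SimpleGraph V) (S : Set V) : Prop :=
  ¬ (G.induce Sᶜ).Connected ∨ Sᶜ.ncard ≤ 1

/-- The vertex connectivity of `G`: the least size of a cut-set. -/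
noncomputable def SimpleGraph.vConn {V : Type*} [Fintype V] (G : SimpleGraph V) : ℕ :=
  sInf {k | ∃ S : Set V, G.IsCutSet S ∧ S.ncard = k}

/-- The independence number of `G`. -/
noncomputable def SimpleGraph.indepNumber {V : Type*} [Fintype V] (G : SimpleGraph V) : ℕ :=
  sSup {n | ∃ s : Finset V, s.card = n ∧ ∀ x ∈ s, ∀ y ∈ s, x ≠ y → ¬ G.Adj x y}

/-- The neighborhood `N(X)` of a set of vertices. -/
def SimpleGraph.nbhdSet {V : Type*} (G : SimpleGraph V) (X : Set V) : Set V :=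
  {v | v ∉ X ∧ ∃ x ∈ X, G.Adj x v}

/-- `X` is a fragment of `G`: `N(X)` is a minimum cut-set and
`V(G) − (X ∪ N(X))` is nonempty. -/
def SimpleGraph.IsFragment {V : Type*} [Fintype V] (G : SimpleGraph V) (X : Set V) : Prop :=
  G.IsCutSet (G.nbhdSet X) ∧ (G.nbhdSet X).ncard = G.vConn ∧ ((X ∪ G.nbhdSet X)ᶜ).Nonempty

/-- An endfragment: a fragment containing no other fragment as a proper subset. -/
def SimpleGraph.IsEndFragment {V : Type*} [Fintype V] (G : SimpleGraph V) (A : Set V) : Prop :=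
  G.IsFragment A ∧ ∀ B : Set V, G.IsFragment B → B ⊆ A → B = A

/-- `G` has a cycle of length at least `k`. -/
def SimpleGraph.HasCycleOfLengthAtLeast {V : Type*} (G : SimpleGraph V) (k : ℕ) : Prop :=
  ∃ (u : V) (c : G.Walk u u), c.IsCycle ∧ k ≤ c.length


open Set

namespace SimpleGraph

variable {V : Type*} [Fintype V] {G : SimpleGraph V}

lemma isCutSet_univ (G : SimpleGraph V) : G.IsCutSet Set.univ := by
  right; simp

lemma vConn_le_ncard {S : Set V} (hS : G.IsCutSet S) : G.vConn ≤ S.ncard :=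
  Nat.sInf_le ⟨S, hS, rfl⟩

lemma exists_minCut (G : SimpleGraph V) : ∃ S : Set V, G.IsCutSet S ∧ S.ncard = G.vConn :=
  Nat.sInf_mem (⟨(Set.univ : Set V).ncard, Set.univ, G.isCutSet_univ, rfl⟩ :
    {k | ∃ S : Set V, G.IsCutSet S ∧ S.ncard = k}.Nonempty)

lemma closed_reach {W : Type*} {Γ : SimpleGraph W} {s : Set W}
    (hs : ∀ ⦃x y⦄, x ∈ s → Γ.Adj x y → y ∈ s) :
    ∀ ⦃x y : W⦄, Γ.Reachable x y → x ∈ s → y ∈ s := by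
  have key : ∀ ⦃x y : W⦄ (p : Γ.Walk x y), x ∈ s → y ∈ s := by
    intro x y p
    induction p with
    | nil => exact id
    | cons h q ih => exact fun hx => ih (hs hx h)
  exact fun x y hr hx => hr.elim fun p => key p hx

lemma nbhd_isCutSet {X : Set V} (hX : X.Nonempty)
    (hext : ((X ∪ G.nbhdSet X)ᶜ).Nonempty) : G.IsCutSet (G.nbhdSet X) := by
  left
  intro hconn
  obtain ⟨x, hx⟩ := hX
  obtain ⟨y, hy⟩ := hext
  have hyX : y ∉ X := fun h => hy (Or.inl h)
  have hyN : y ∉ G.nbhdSet X := fun h => hy (Or.inr h)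
  have hxN : x ∉ G.nbhdSet X := fun h => h.1 hx
  have hr : (G.induce (G.nbhdSet X)ᶜ).Reachable ⟨x, hxN⟩ ⟨y, hyN⟩ :=
    hconn.preconnected _ _
  have hclosed : ∀ ⦃a b : ((G.nbhdSet X)ᶜ : Set V)⦄,
      (a : V) ∈ X → (G.induce (G.nbhdSet X)ᶜ).Adj a b → (b : V) ∈ X := by
    rintro ⟨a, ha⟩ ⟨b, hb⟩ haX hadj
    by_contra hbX
    exact hb ⟨hbX, a, haX, hadj⟩
  exact hyX (closed_reach (s := {z : ((G.nbhdSet X)ᶜ : Set V) | (z : V) ∈ X})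
    (fun a b ha h => hclosed ha h) hr hx)

lemma vConn_le_nbhd {X : Set V} (hX : X.Nonempty)
    (hext : ((X ∪ G.nbhdSet X)ᶜ).Nonempty) : G.vConn ≤ (G.nbhdSet X).ncard :=
  vConn_le_ncard (nbhd_isCutSet hX hext)


variable {V : Type*} [Fintype V] {G : SimpleGraph V}

lemma nbhd_corner_subset {X NX Y NY : Set V}
    (hX : ∀ x ∈ X, ∀ w, G.Adj x w → w ∈ X ∪ NX)
    (hY : ∀ y ∈ Y, ∀ w, G.Adj y w → w ∈ Y ∪ NY) :
    G.nbhdSet (X ∩ Y) ⊆ (NX ∩ Y) ∪ (X ∩ NY) ∪ (NX ∩ NY) := by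
  rintro w ⟨hwC, c, ⟨hcX, hcY⟩, hadj⟩
  rcases hX c hcX w hadj with h1 | h1
  · rcases hY c hcY w hadj with h2 | h2
    · exact absurd ⟨h1, h2⟩ hwC
    · exact Or.inl (Or.inr ⟨h1, h2⟩)
  · rcases hY c hcY w hadj with h2 | h2
    · exact Or.inl (Or.inl ⟨h1, h2⟩)
    · exact Or.inr ⟨h1, h2⟩

lemma corner_ext {X NX Y NY : Set V} {z : V}
    (hX : ∀ x ∈ X, ∀ w, G.Adj x w → w ∈ X ∪ NX)
    (hY : ∀ y ∈ Y, ∀ w, G.Adj y w → w ∈ Y ∪ NY)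
    (hzY : z ∉ Y) (hzNY : z ∉ NY) :
    z ∈ ((X ∩ Y) ∪ G.nbhdSet (X ∩ Y))ᶜ := by
  rintro (⟨-, h⟩ | h)
  · exact hzY h
  · rcases nbhd_corner_subset hX hY h with (⟨-, h⟩ | ⟨-, h⟩) | ⟨-, h⟩
    · exact hzY h
    · exact hzNY h
    · exact hzNY h

lemma corner_ineq {X NX Y NY : Set V} {z : V}
    (hX : ∀ x ∈ X, ∀ w, G.Adj x w → w ∈ X ∪ NX)
    (hY : ∀ y ∈ Y, ∀ w, G.Adj y w → w ∈ Y ∪ NY)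
    (hC : (X ∩ Y).Nonempty) (hzY : z ∉ Y) (hzNY : z ∉ NY) :
    G.vConn ≤ (NX ∩ Y).ncard + (X ∩ NY).ncard + (NX ∩ NY).ncard := by
  have h1 := vConn_le_nbhd hC ⟨z, corner_ext hX hY hzY hzNY⟩
  refine h1.trans ?_
  calc (G.nbhdSet (X ∩ Y)).ncard
      ≤ ((NX ∩ Y) ∪ (X ∩ NY) ∪ (NX ∩ NY)).ncard :=
        Set.ncard_le_ncard (nbhd_corner_subset hX hY) (Set.toFinite _)
    _ ≤ ((NX ∩ Y) ∪ (X ∩ NY)).ncard + (NX ∩ NY).ncard := Set.ncard_union_le _ _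
    _ ≤ (NX ∩ Y).ncard + (X ∩ NY).ncard + (NX ∩ NY).ncard := by
        exact Nat.add_le_add_right (Set.ncard_union_le _ _) _

lemma corner_frag {X NX Y NY : Set V} {z : V}
    (hX : ∀ x ∈ X, ∀ w, G.Adj x w → w ∈ X ∪ NX)
    (hY : ∀ y ∈ Y, ∀ w, G.Adj y w → w ∈ Y ∪ NY)
    (hC : (X ∩ Y).Nonempty) (hzY : z ∉ Y) (hzNY : z ∉ NY)
    (hle : (NX ∩ Y).ncard + (X ∩ NY).ncard + (NX ∩ NY).ncard ≤ G.vConn) :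
    G.IsFragment (X ∩ Y) := by
  have hext : (((X ∩ Y) ∪ G.nbhdSet (X ∩ Y))ᶜ).Nonempty :=
    ⟨z, corner_ext hX hY hzY hzNY⟩
  refine ⟨nbhd_isCutSet hC hext, le_antisymm ?_ (vConn_le_nbhd hC hext), hext⟩
  calc (G.nbhdSet (X ∩ Y)).ncard
      ≤ ((NX ∩ Y) ∪ (X ∩ NY) ∪ (NX ∩ NY)).ncard :=
        Set.ncard_le_ncard (nbhd_corner_subset hX hY) (Set.toFinite _)
    _ ≤ ((NX ∩ Y) ∪ (X ∩ NY)).ncard + (NX ∩ NY).ncard := Set.ncard_union_le _ _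
    _ ≤ (NX ∩ Y).ncard + (X ∩ NY).ncard + (NX ∩ NY).ncard :=
        Nat.add_le_add_right (Set.ncard_union_le _ _) _
    _ ≤ G.vConn := hle

lemma size_bound [DecidableRel G.Adj] {u : V} {X P : Set V} (hu : u ∈ X)
    (hnbr : ∀ x ∈ X, ∀ w, G.Adj x w → w ∈ X ∪ P) :
    G.minDegree + 1 ≤ X.ncard + P.ncard := by
  have hsub : G.neighborSet u ⊆ (X ∪ P) \ {u} := by
    intro w hw
    exact ⟨hnbr u hu w hw, fun h => G.irrefl (h ▸ hw)⟩
  have hdeg : G.minDegree ≤ ((X ∪ P) \ {u}).ncard := by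
    refine (G.minDegree_le_degree u).trans ?_
    have h0 : (G.neighborSet u).ncard = G.degree u := by
      rw [Set.ncard_eq_toFinset_card']
      simp [SimpleGraph.degree, neighborFinset_def]
    rw [← h0]
    exact Set.ncard_le_ncard hsub (Set.toFinite _)
  have h2 : ((X ∪ P) \ {u}).ncard + 1 = (X ∪ P).ncard :=
    Set.ncard_diff_singleton_add_one (Or.inl hu) (Set.toFinite _)
  have h3 : (X ∪ P).ncard ≤ X.ncard + P.ncard := Set.ncard_union_le _ _
  omega

lemma ncard_triple {S X Y Z : Set V}
    (hcov : ∀ x ∈ S, x ∈ X ∨ x ∈ Y ∨ x ∈ Z)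
    (hXY : ∀ x, x ∈ X → x ∈ Y → False)
    (hXZ : ∀ x, x ∈ X → x ∈ Z → False)
    (hYZ : ∀ x, x ∈ Y → x ∈ Z → False) :
    S.ncard = (X ∩ S).ncard + (Y ∩ S).ncard + (Z ∩ S).ncard := by
  have hS : S = (X ∩ S) ∪ ((Y ∩ S) ∪ (Z ∩ S)) := by
    ext x
    constructor
    · intro hx
      rcases hcov x hx with h | h | h
      · exact Or.inl ⟨h, hx⟩
      · exact Or.inr (Or.inl ⟨h, hx⟩)
      · exact Or.inr (Or.inr ⟨h, hx⟩)
    · rintro (⟨-, h⟩ | ⟨-, h⟩ | ⟨-, h⟩) <;> exact h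
  have hS' : S.ncard = ((X ∩ S) ∪ ((Y ∩ S) ∪ (Z ∩ S))).ncard := by rw [← hS]
  rw [hS', Set.ncard_union_eq ?d1 (Set.toFinite _) (Set.toFinite _),
    Set.ncard_union_eq ?d2 (Set.toFinite _) (Set.toFinite _), add_assoc]
  case d1 =>
    rw [Set.disjoint_left]
    rintro x ⟨hx, -⟩ (⟨hy, -⟩ | ⟨hz, -⟩)
    · exact hXY x hx hy
    · exact hXZ x hx hz
  case d2 =>
    rw [Set.disjoint_left]
    rintro x ⟨hy, -⟩ ⟨hz, -⟩
    exact hYZ x hy hz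

end SimpleGraph
/-- **Veldman.** If `δ > 3κ/2 − 1`, then no endfragment of `G` contains a vertex `v`
with `κ(G − v) = κ − 1`. -/
theorem endfragment_no_connectivity_dropping_vertex
    {V : Type*} [Fintype V] [DecidableEq V] (G : SimpleGraph V) [DecidableRel G.Adj]
    (hδ : 2 * G.minDegree + 2 > 3 * G.vConn) :
    ∀ A : Set V, G.IsEndFragment A → ∀ v ∈ A,
      (G.induce ({v}ᶜ : Set V)).vConn + 1 ≠ G.vConn := by
  intro A hA v hv hc
  obtain ⟨⟨hNAcut, hNAcard, hAbarne⟩, hmin⟩ := hA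
  set NA := G.nbhdSet A with hNA
  set Abar := (A ∪ NA)ᶜ with hAbardef
  -- basic facts about A, NA, Abar
  have hAnbr : ∀ x ∈ A, ∀ w, G.Adj x w → w ∈ A ∪ NA := by
    intro x hx w hw
    by_cases hwA : w ∈ A
    · exact Or.inl hwA
    · exact Or.inr ⟨hwA, x, hx, hw⟩
  have hAbarnbr : ∀ x ∈ Abar, ∀ w, G.Adj x w → w ∈ Abar ∪ NA := by
    intro x hx w hw
    by_cases hwAb : w ∈ Abar
    · exact Or.inl hwAb
    · right
      by_cases hwN : w ∈ NA
      · exact hwN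
      · exfalso
        have hwA : w ∈ A := by
          by_contra hwA
          exact hwAb (fun h => h.elim hwA hwN)
        have hxA : x ∉ A := fun h => hx (Or.inl h)
        exact hx (Or.inr ⟨hxA, w, hwA, hw.symm⟩)
  have coverA : ∀ x : V, x ∈ A ∨ x ∈ NA ∨ x ∈ Abar := by
    intro x
    by_cases h1 : x ∈ A
    · exact Or.inl h1
    by_cases h2 : x ∈ NA
    · exact Or.inr (Or.inl h2)
    · exact Or.inr (Or.inr (fun h => h.elim h1 h2))
  have dA_NA : ∀ x : V, x ∈ A → x ∈ NA → False := fun x hx h => h.1 hx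
  have dA_Ab : ∀ x : V, x ∈ A → x ∈ Abar → False := fun x hx h => h (Or.inl hx)
  have dNA_Ab : ∀ x : V, x ∈ NA → x ∈ Abar → False := fun x hx h => h (Or.inr hx)
  -- the whole graph is big
  have hbig : G.vConn + 2 ≤ Fintype.card V := by
    have hsplit := Set.ncard_add_ncard_compl (A ∪ NA)
    have hAN : (A ∪ NA).ncard = A.ncard + NA.ncard :=
      Set.ncard_union_eq (Set.disjoint_left.2 fun {x} hx h => h.1 hx)
        (Set.toFinite _) (Set.toFinite _)
    have h1A : 1 ≤ A.ncard := (Set.ncard_pos (Set.toFinite _)).2 ⟨v, hv⟩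
    have h1Ab : 1 ≤ Abar.ncard := (Set.ncard_pos (Set.toFinite _)).2 hAbarne
    rw [Nat.card_eq_fintype_card, ← hAbardef] at hsplit
    omega
  -- extract a minimum cut of G - v
  obtain ⟨S', hS'cut, hS'card⟩ := (G.induce ({v}ᶜ : Set V)).exists_minCut
  set Timg : Set V := Subtype.val '' S' with hTimg
  set T : Set V := insert v Timg with hT
  have hvTimg : v ∉ Timg := by
    rintro ⟨⟨x, hx⟩, -, h⟩
    simp only [Set.mem_compl_iff, Set.mem_singleton_iff] at hx
    exact hx h
  have hTcard : T.ncard = G.vConn := by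
    rw [hT, Set.ncard_insert_of_notMem hvTimg (Set.toFinite _), hTimg,
      Set.ncard_image_of_injective _ Subtype.val_injective, hS'card, hc]
  have hvT : v ∈ T := Set.mem_insert _ _
  have hTc : Tᶜ = Subtype.val '' (S'ᶜ) := by
    ext x
    constructor
    · intro hx
      have hxv : x ∈ ({v}ᶜ : Set V) := by
        intro h
        exact hx (by rw [Set.mem_singleton_iff] at h; rw [h]; exact hvT)
      refine ⟨⟨x, hxv⟩, fun h => hx (Set.mem_insert_iff.2 (Or.inr ⟨⟨x, hxv⟩, h, rfl⟩)), rfl⟩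
    · rintro ⟨⟨y, hy⟩, hyS, rfl⟩
      intro hyT
      rcases Set.mem_insert_iff.1 hyT with h | h
      · exact hy h
      · obtain ⟨z, hz, hzy⟩ := h
        exact hyS (by rwa [show z = ⟨y, hy⟩ from Subtype.ext hzy] at hz)
  rcases hS'cut with hdisc | hsmall
  swap
  · -- small case : |V| ≤ κ + 1
    have h1 : Tᶜ.ncard ≤ 1 := by
      rw [hTc, Set.ncard_image_of_injective _ Subtype.val_injective]
      exact hsmall
    have h2 := Set.ncard_add_ncard_compl T
    rw [Nat.card_eq_fintype_card] at h2
    omega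
  -- transfer disconnectedness to G.induce Tᶜ
  have hmemv : ∀ x : V, x ∈ Tᶜ → x ∈ ({v}ᶜ : Set V) := by
    intro x hx h
    rw [Set.mem_singleton_iff] at h
    exact hx (h ▸ hvT)
  have hmemS : ∀ (x : V) (hx : x ∈ Tᶜ), (⟨x, hmemv x hx⟩ : ({v}ᶜ : Set V)) ∈ S'ᶜ := by
    intro x hx hmem
    exact hx (Set.mem_insert_iff.2 (Or.inr ⟨_, hmem, rfl⟩))
  have hTdisc : ¬ (G.induce Tᶜ).Connected := by
    intro hcon
    apply hdisc
    refine SimpleGraph.Connected.map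
      (⟨fun x => ⟨⟨(x : V), hmemv x x.2⟩, hmemS x x.2⟩, ?_⟩ :
        (G.induce Tᶜ) →g ((G.induce ({v}ᶜ : Set V)).induce S'ᶜ)) ?_ hcon
    · intro a b hab
      exact hab
    · rintro ⟨⟨x, hxv⟩, hxS⟩
      have hxTc : x ∈ Tᶜ := by
        intro hxT
        rcases Set.mem_insert_iff.1 hxT with h | h
        · exact hxv (by rw [h]; rfl)
        · obtain ⟨z, hz, hzy⟩ := h
          exact hxS (by rwa [show z = ⟨x, hxv⟩ from Subtype.ext hzy] at hz)
      exact ⟨⟨x, hxTc⟩, Subtype.ext (Subtype.ext rfl)⟩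
  by_cases hne : Nonempty (Tᶜ : Set V)
  swap
  · -- Tᶜ empty, contradiction with hbig
    have hTce : Tᶜ = ∅ := Set.not_nonempty_iff_eq_empty.1 (fun h => hne (Set.nonempty_coe_sort.2 h))
    have h2 := Set.ncard_add_ncard_compl T
    rw [Nat.card_eq_fintype_card, hTce, Set.ncard_empty] at h2
    omega
  have hexab : ∃ a b : (Tᶜ : Set V), ¬ (G.induce Tᶜ).Reachable a b := by
    by_contra h
    push_neg at h
    haveI := hne
    exact hTdisc ⟨fun a b => h a b⟩
  obtain ⟨a, b, hab⟩ := hexab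
  set B : Set V := {x | ∃ h : x ∈ Tᶜ, (G.induce Tᶜ).Reachable a ⟨x, h⟩} with hBdef
  set Bb : Set V := Tᶜ \ B with hBbdef
  have haB : (a : V) ∈ B := ⟨a.2, by exact SimpleGraph.Reachable.refl _⟩
  have hbBb : (b : V) ∈ Bb := by
    refine ⟨b.2, ?_⟩
    rintro ⟨h, hr⟩
    rw [show (⟨(b : V), h⟩ : (Tᶜ : Set V)) = b from Subtype.ext rfl] at hr
    exact hab hr
  have hBnbr : ∀ x ∈ B, ∀ w, G.Adj x w → w ∈ B ∪ T := by
    rintro x ⟨hx, hr⟩ w hw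
    by_cases hwT : w ∈ T
    · exact Or.inr hwT
    · have hadj : (G.induce Tᶜ).Adj ⟨x, hx⟩ ⟨w, hwT⟩ := hw
      exact Or.inl ⟨hwT, hr.trans hadj.reachable⟩
  have hBbnbr : ∀ x ∈ Bb, ∀ w, G.Adj x w → w ∈ Bb ∪ T := by
    rintro x ⟨hxTc, hxnB⟩ w hw
    by_cases hwT : w ∈ T
    · exact Or.inr hwT
    · left
      refine ⟨hwT, fun hwB => ?_⟩
      obtain ⟨hwTc, hr⟩ := hwB
      have hadj : (G.induce Tᶜ).Adj ⟨w, hwTc⟩ ⟨x, hxTc⟩ := hw.symm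
      exact hxnB ⟨hxTc, hr.trans hadj.reachable⟩
  have cover2 : ∀ x : V, x ∈ B ∨ x ∈ T ∨ x ∈ Bb := by
    intro x
    by_cases hT' : x ∈ T
    · exact Or.inr (Or.inl hT')
    by_cases hB' : x ∈ B
    · exact Or.inl hB'
    · exact Or.inr (Or.inr ⟨hT', hB'⟩)
  have dB_T : ∀ x : V, x ∈ B → x ∈ T → False := fun x hx h => hx.1 h
  have dT_Bb : ∀ x : V, x ∈ T → x ∈ Bb → False := fun x hx h => h.1 hx
  have dB_Bb : ∀ x : V, x ∈ B → x ∈ Bb → False := fun x hx h => h.2 hx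
  -- cardinal identities
  have i1 : T.ncard = (A ∩ T).ncard + (NA ∩ T).ncard + (Abar ∩ T).ncard :=
    SimpleGraph.ncard_triple (fun x _ => coverA x) dA_NA dA_Ab dNA_Ab
  have i2 : NA.ncard = (B ∩ NA).ncard + (T ∩ NA).ncard + (Bb ∩ NA).ncard :=
    SimpleGraph.ncard_triple (fun x _ => cover2 x) dB_T
      dB_Bb (fun x h h' => dT_Bb x h h')
  rw [Set.inter_comm B NA, Set.inter_comm T NA, Set.inter_comm Bb NA] at i2
  have i3 : A.ncard = (B ∩ A).ncard + (T ∩ A).ncard + (Bb ∩ A).ncard :=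
    SimpleGraph.ncard_triple (fun x _ => cover2 x) dB_T dB_Bb (fun x h h' => dT_Bb x h h')
  rw [Set.inter_comm B A, Set.inter_comm T A, Set.inter_comm Bb A] at i3
  have i4 : Abar.ncard = (B ∩ Abar).ncard + (T ∩ Abar).ncard + (Bb ∩ Abar).ncard :=
    SimpleGraph.ncard_triple (fun x _ => cover2 x) dB_T dB_Bb (fun x h h' => dT_Bb x h h')
  rw [Set.inter_comm B Abar, Set.inter_comm T Abar, Set.inter_comm Bb Abar] at i4
  have i5 : B.ncard = (A ∩ B).ncard + (NA ∩ B).ncard + (Abar ∩ B).ncard :=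
    SimpleGraph.ncard_triple (fun x _ => coverA x) dA_NA dA_Ab dNA_Ab
  have i6 : Bb.ncard = (A ∩ Bb).ncard + (NA ∩ Bb).ncard + (Abar ∩ Bb).ncard :=
    SimpleGraph.ncard_triple (fun x _ => coverA x) dA_NA dA_Ab dNA_Ab
  -- size bounds
  obtain ⟨u, hu⟩ := hAbarne
  have b1 : G.minDegree + 1 ≤ A.ncard + NA.ncard := SimpleGraph.size_bound hv hAnbr
  have b2 : G.minDegree + 1 ≤ Abar.ncard + NA.ncard := SimpleGraph.size_bound hu hAbarnbr
  have b3 : G.minDegree + 1 ≤ B.ncard + T.ncard := SimpleGraph.size_bound haB hBnbr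
  have b4 : G.minDegree + 1 ≤ Bb.ncard + T.ncard := SimpleGraph.size_bound hbBb hBbnbr
  -- v ∈ A ∩ T
  have htA1 : 1 ≤ (A ∩ T).ncard := (Set.ncard_pos (Set.toFinite _)).2 ⟨v, hv, hvT⟩
  -- corner disjunctions
  have d9 : (A ∩ B).ncard = 0 ∨
      G.vConn + 1 ≤ (NA ∩ B).ncard + (A ∩ T).ncard + (NA ∩ T).ncard := by
    by_cases hne9 : (A ∩ B).Nonempty
    · by_cases hle9 : (NA ∩ B).ncard + (A ∩ T).ncard + (NA ∩ T).ncard ≤ G.vConn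
      · exfalso
        have hfr := SimpleGraph.corner_frag hAnbr hBnbr hne9 hbBb.2 (fun h => hbBb.1 h) hle9
        have heq := hmin (A ∩ B) hfr Set.inter_subset_left
        have : v ∈ A ∩ B := heq.symm ▸ hv
        exact this.2.1 hvT
      · exact Or.inr (by omega)
    · exact Or.inl (by rw [Set.not_nonempty_iff_eq_empty.1 hne9]; simp)
  have d10 : (A ∩ Bb).ncard = 0 ∨
      G.vConn + 1 ≤ (NA ∩ Bb).ncard + (A ∩ T).ncard + (NA ∩ T).ncard := by
    by_cases hne10 : (A ∩ Bb).Nonempty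
    · by_cases hle10 : (NA ∩ Bb).ncard + (A ∩ T).ncard + (NA ∩ T).ncard ≤ G.vConn
      · exfalso
        have hfr := SimpleGraph.corner_frag hAnbr hBbnbr hne10
          (fun h => h.2 haB) (fun h => dB_T _ haB h) hle10
        have heq := hmin (A ∩ Bb) hfr Set.inter_subset_left
        have : v ∈ A ∩ Bb := heq.symm ▸ hv
        exact this.2.1 hvT
      · exact Or.inr (by omega)
    · exact Or.inl (by rw [Set.not_nonempty_iff_eq_empty.1 hne10]; simp)
  have d11 : (Abar ∩ B).ncard = 0 ∨
      G.vConn ≤ (NA ∩ B).ncard + (Abar ∩ T).ncard + (NA ∩ T).ncard := by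
    by_cases hne11 : (Abar ∩ B).Nonempty
    · exact Or.inr (SimpleGraph.corner_ineq hAbarnbr hBnbr hne11 hbBb.2 (fun h => hbBb.1 h))
    · exact Or.inl (by rw [Set.not_nonempty_iff_eq_empty.1 hne11]; simp)
  have d12 : (Abar ∩ Bb).ncard = 0 ∨
      G.vConn ≤ (NA ∩ Bb).ncard + (Abar ∩ T).ncard + (NA ∩ T).ncard := by
    by_cases hne12 : (Abar ∩ Bb).Nonempty
    · exact Or.inr (SimpleGraph.corner_ineq hAbarnbr hBbnbr hne12
        (fun h => h.2 haB) (fun h => dB_T _ haB h))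
    · exact Or.inl (by rw [Set.not_nonempty_iff_eq_empty.1 hne12]; simp)
  have h1Ab : 1 ≤ Abar.ncard := (Set.ncard_pos (Set.toFinite _)).2 ⟨u, hu⟩
  rcases d9 with d9 | d9 <;> rcases d10 with d10 | d10 <;>
    rcases d11 with d11 | d11 <;> rcases d12 with d12 | d12 <;> omega
end

section
/- Let G be a hamiltonian graph containing vertices v₁,...,v_r each of degree at least r in G. Then any two vertices of G are connected by a path of length at least r. -/
/-- The independence number of `G`. -/
noncomputable def SimpleGraph.indepNum' {V : Type*} [Fintype V] (G : SimpleGraph V) : ℕ :=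
  sSup {n | ∃ s : Finset V, s.card = n ∧ ∀ x ∈ s, ∀ y ∈ s, x ≠ y → ¬ G.Adj x y}

set_option linter.unusedSectionVars false

namespace SimpleGraph.Walk
variable {V : Type*} {G : SimpleGraph V}

/-- Take the first `i` edges of a walk. -/
def wtake {u v : V} : (p : G.Walk u v) → (i : ℕ) → G.Walk u (p.getVert i)
  | nil, _ => nil
  | cons _ _, 0 => nil
  | cons h q, (i+1) => cons h (wtake q i)

/-- Drop the first `i` edges of a walk. -/
def wdrop {u v : V} : (p : G.Walk u v) → (i : ℕ) → G.Walk (p.getVert i) v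
  | nil, _ => nil
  | cons h q, 0 => cons h q
  | cons _ q, (i+1) => wdrop q i

@[simp] lemma wtake_append_wdrop {u v : V} (p : G.Walk u v) (i : ℕ) :
    (p.wtake i).append (p.wdrop i) = p := by
  induction p generalizing i with
  | nil => cases i <;> rfl
  | cons h q ih =>
    cases i with
    | zero => rfl
    | succ i => simp [wtake, wdrop, ih]

lemma length_wtake {u v : V} (p : G.Walk u v) {i : ℕ} (hi : i ≤ p.length) :
    (p.wtake i).length = i := by
  induction p generalizing i with
  | nil => simp only [length_nil] at hi; simp only [Nat.le_zero] at hi; subst hi; rfl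
  | cons h q ih =>
    cases i with
    | zero => rfl
    | succ i => show (cons h (q.wtake i)).length = i + 1; rw [length_cons, ih (by simpa using hi)]

lemma length_wdrop {u v : V} (p : G.Walk u v) (i : ℕ) :
    (p.wdrop i).length = p.length - i := by
  induction p generalizing i with
  | nil => cases i <;> simp [wdrop]
  | cons h q ih =>
    cases i with
    | zero => rfl
    | succ i => show (q.wdrop i).length = (cons h q).length - (i+1); rw [ih, length_cons]; omega

lemma support_wdrop_zero {u v : V} (p : G.Walk u v) : (p.wdrop 0).support = p.support := by
  cases p <;> rfl

lemma support_wdrop_succ {u v : V} (p : G.Walk u v) {i : ℕ} (hi : i < p.length) :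
    (p.wdrop i).support = p.getVert i :: (p.wdrop (i+1)).support := by
  induction p generalizing i with
  | nil => simp at hi
  | cons h q ih =>
    cases i with
    | zero =>
      show (cons h q).support = _ :: (q.wdrop 0).support
      rw [support_wdrop_zero, support_cons]
      rfl
    | succ i =>
      show (q.wdrop i).support = _ :: (q.wdrop (i+1)).support
      exact ih (by simpa using hi)

lemma support_wtake_subset {u v : V} (p : G.Walk u v) (i : ℕ) :
    ∀ t ∈ (p.wtake i).support, t ∈ p.support := by
  induction p generalizing i with
  | nil => cases i <;> simp [wtake]
  | cons h q ih =>
    cases i with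
    | zero => intro t ht; have ht' : t ∈ [_] := ht; rw [List.mem_singleton] at ht'; subst ht'; exact start_mem_support _
    | succ i =>
      intro t ht
      replace ht : t ∈ (cons h (q.wtake i)).support := ht
      simp only [support_cons, List.mem_cons] at ht ⊢
      rcases ht with h1 | h2
      · exact Or.inl h1
      · exact Or.inr (ih i t h2)

lemma support_wdrop_subset {u v : V} (p : G.Walk u v) (i : ℕ) :
    ∀ t ∈ (p.wdrop i).support, t ∈ p.support := by
  induction p generalizing i with
  | nil => intro t ht; cases i <;> exact ht
  | cons h q ih =>
    cases i with
    | zero => intro t ht; exact ht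
    | succ i =>
      intro t ht
      simp only [support_cons, List.mem_cons]
      exact Or.inr (ih i t ht)

protected lemma IsPath.wdrop {u v : V} {p : G.Walk u v} (hp : p.IsPath) (i : ℕ) :
    (p.wdrop i).IsPath := by
  induction p generalizing i with
  | nil => cases i <;> exact hp
  | cons h q ih =>
    cases i with
    | zero => exact hp
    | succ i => exact ih (cons_isPath_iff _ _ |>.mp hp).1 i

protected lemma IsPath.wtake {u v : V} {p : G.Walk u v} (hp : p.IsPath) (i : ℕ) :
    (p.wtake i).IsPath := by
  induction p generalizing i with
  | nil => cases i <;> exact hp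
  | cons h q ih =>
    cases i with
    | zero => exact IsPath.nil
    | succ i =>
      rw [cons_isPath_iff] at hp
      show (cons h (q.wtake i)).IsPath
      rw [cons_isPath_iff]
      exact ⟨ih hp.1 i, fun hmem => hp.2 (support_wtake_subset q i _ hmem)⟩

lemma support_eq_wtake_wdrop {u v : V} (p : G.Walk u v) (i : ℕ) :
    p.support = (p.wtake i).support ++ ((p.wdrop i).support).tail := by
  conv_lhs => rw [← wtake_append_wdrop p i]
  exact support_append _ _

lemma support_eq_wtake_wdrop' {u v : V} (p : G.Walk u v) {i : ℕ} (hi : i < p.length) :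
    p.support = (p.wtake i).support ++ (p.wdrop (i+1)).support := by
  rw [support_eq_wtake_wdrop p i, support_wdrop_succ p hi, List.tail_cons]

lemma getVert_mem_support' {u v : V} (p : G.Walk u v) (i : ℕ) :
    p.getVert i ∈ p.support := by
  induction p generalizing i with
  | nil => cases i <;> simp [getVert]
  | cons h q ih =>
    cases i with
    | zero => exact start_mem_support _
    | succ i => simp only [getVert_cons_succ, support_cons, List.mem_cons]; exact Or.inr (ih i)

lemma getVert_injOn' {u v : V} {p : G.Walk u v} (hp : p.IsPath) :
    ∀ i ≤ p.length, ∀ j ≤ p.length, p.getVert i = p.getVert j → i = j := by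
  induction p with
  | nil => intro i hi j hj _; simp only [length_nil, Nat.le_zero] at hi hj; omega
  | cons h q ih =>
    rw [cons_isPath_iff] at hp
    intro i hi j hj hij
    match i, j with
    | 0, 0 => rfl
    | 0, (j+1) =>
      exfalso; apply hp.2
      rw [getVert_zero, getVert_cons_succ] at hij
      rw [hij]
      exact q.getVert_mem_support' j
    | (i+1), 0 =>
      exfalso; apply hp.2
      rw [getVert_zero, getVert_cons_succ] at hij
      rw [← hij]
      exact q.getVert_mem_support' i
    | (i+1), (j+1) =>
      simp only [getVert_cons_succ] at hij
      have := ih hp.1 i (by simpa using hi) j (by simpa using hj) hij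
      omega

end SimpleGraph.Walk


namespace SimpleGraph.Walk
variable {V : Type*} {G : SimpleGraph V}

lemma isPath_append_of_disj {u v w : V} {p : G.Walk u v} {q : G.Walk v w}
    (hp : p.IsPath) (hq : q.IsPath) (hdisj : ∀ t ∈ p.support, t ∈ q.support → t = v) :
    (p.append q).IsPath := by
  apply IsPath.mk'
  rw [support_append]
  apply List.Nodup.append hp.support_nodup
  · have := hq.support_nodup
    rw [support_eq_cons] at this
    exact this.of_cons
  · intro t ht hq'
    have htq : t ∈ q.support := List.mem_of_mem_tail hq'
    have := hdisj t ht htq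
    subst this
    have := hq.support_nodup
    rw [support_eq_cons] at this
    exact this.notMem hq'

lemma exists_firstHit {u w : V} (W : G.Walk u w) (S : V → Prop) [DecidablePred S]
    (h : ∃ t ∈ W.support, S t) :
    ∃ (k : V) (R : G.Walk u k) (Rem : G.Walk k w),
      S k ∧ R.append Rem = W ∧ ∀ t ∈ R.support, S t → t = k := by
  induction W with
  | nil =>
    obtain ⟨t, ht, hSt⟩ := h
    simp only [support_nil, List.mem_singleton] at ht
    subst ht
    exact ⟨_, nil, nil, hSt, rfl, by simp⟩
  | @cons a b c hab q ih =>
    by_cases hSa : S a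
    · exact ⟨a, nil, cons hab q, hSa, rfl, by simp⟩
    · obtain ⟨t, ht, hSt⟩ := h
      rw [support_cons, List.mem_cons] at ht
      have ht' : t ∈ q.support := by
        rcases ht with rfl | ht'
        · exact absurd hSt hSa
        · exact ht'
      obtain ⟨k, R, Rem, hSk, happ, hfirst⟩ := ih ⟨t, ht', hSt⟩
      refine ⟨k, cons hab R, Rem, hSk, ?_, ?_⟩
      · rw [cons_append, happ]
      · intro t' ht' hSt'
        rw [support_cons, List.mem_cons] at ht'
        rcases ht' with rfl | ht''
        · exact absurd hSt' hSa
        · exact hfirst t' ht'' hSt'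

end SimpleGraph.Walk

namespace SimpleGraph
variable {V : Type*} [DecidableEq V] {G : SimpleGraph V}

lemma exists_cliquePath : ∀ (n : ℕ) (K : Finset V), K.card = n →
    (∀ a ∈ K, ∀ b ∈ K, a ≠ b → G.Adj a b) → ∀ k1 k2, k1 ∈ K → k2 ∈ K → k1 ≠ k2 →
    ∃ Q : G.Walk k1 k2, Q.IsPath ∧ Q.length + 1 = K.card ∧ (∀ t, t ∈ Q.support ↔ t ∈ K) := by
  intro n
  induction n using Nat.strong_induction_on with
  | _ n ih =>
    intro K hcard hclique k1 k2 hk1 hk2 hne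
    by_cases h2 : K.card ≤ 2
    · have hsub : ({k1, k2} : Finset V) ⊆ K := by
        intro t ht
        rcases Finset.mem_insert.mp ht with rfl | ht'
        · exact hk1
        · rw [Finset.mem_singleton] at ht'; subst ht'; exact hk2
      have hc2 : ({k1, k2} : Finset V).card = 2 := by
        rw [Finset.card_insert_of_notMem (by simpa using hne), Finset.card_singleton]
      have hKeq : K = {k1, k2} := (Finset.eq_of_subset_of_card_le hsub (by omega)).symm
      have hadj : G.Adj k1 k2 := hclique k1 hk1 k2 hk2 hne
      refine ⟨Walk.cons hadj Walk.nil, ?_, ?_, ?_⟩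
      · rw [Walk.cons_isPath_iff]
        exact ⟨Walk.IsPath.nil, by simpa using hne⟩
      · simp only [Walk.length_cons, Walk.length_nil]
        rw [hKeq, hc2]
      · intro t
        rw [hKeq]
        simp [List.mem_cons]
    · push_neg at h2
      have : ∃ k3 ∈ K, k3 ≠ k1 ∧ k3 ≠ k2 := by
        by_contra hc
        push_neg at hc
        have : K ⊆ {k1, k2} := by
          intro t ht
          rcases eq_or_ne t k1 with rfl | h1
          · simp
          rcases eq_or_ne t k2 with rfl | hh2
          · simp
          · exact absurd (hc t ht h1) hh2
        have := Finset.card_le_card this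
        have : K.card ≤ 2 := le_trans this (Finset.card_insert_le _ _ |>.trans (by simp))
        omega
      obtain ⟨k3, hk3, hk31, hk32⟩ := this
      have hk3' : k3 ∈ K.erase k1 := Finset.mem_erase.mpr ⟨hk31, hk3⟩
      have hk2' : k2 ∈ K.erase k1 := Finset.mem_erase.mpr ⟨hne.symm, hk2⟩
      have hcard' : (K.erase k1).card = n - 1 := by
        rw [Finset.card_erase_of_mem hk1, hcard]
      obtain ⟨Q', hQ'path, hQ'len, hQ'supp⟩ := ih (n-1) (by omega) (K.erase k1) hcard'
        (fun a ha b hb hab => hclique a (Finset.mem_of_mem_erase ha) b (Finset.mem_of_mem_erase hb) hab)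
        k3 k2 hk3' hk2' hk32
      have hadj : G.Adj k1 k3 := hclique k1 hk1 k3 hk3 (Ne.symm hk31)
      refine ⟨Walk.cons hadj Q', ?_, ?_, ?_⟩
      · rw [Walk.cons_isPath_iff]
        refine ⟨hQ'path, fun hmem => ?_⟩
        have := (hQ'supp k1).mp hmem
        exact (Finset.mem_erase.mp this).1 rfl
      · rw [Walk.length_cons]
        rw [Finset.card_erase_of_mem hk1] at hQ'len
        omega
      · intro t
        rw [Walk.support_cons, List.mem_cons, hQ'supp t]
        constructor
        · rintro (rfl | ht)
          · exact hk1
          · exact Finset.mem_of_mem_erase ht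
        · intro ht
          rcases eq_or_ne t k1 with rfl | hh
          · exact Or.inl rfl
          · exact Or.inr (Finset.mem_erase.mpr ⟨hh, ht⟩)

end SimpleGraph


namespace SimpleGraph
variable {V : Type*} [DecidableEq V] {G : SimpleGraph V}

open Walk

lemma arc_split [Fintype V] {x y a : V} (hx : x ≠ y) (c : G.Walk a a)
    (hc : c.IsHamiltonianCycle) :
    ∃ (q1 : G.Walk x y) (q2 : G.Walk y x), q1.IsPath ∧ q2.IsPath ∧
      q1.length + q2.length = Fintype.card V ∧
      (∀ z, z ∈ q1.support ∨ z ∈ q2.support) ∧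
      (∀ z, z ∈ q1.support → z ∈ q2.support → (z = x ∨ z = y)) := by
  have hxc : x ∈ c.support := hc.mem_support x
  set c' := c.rotate x hxc with hc'def
  have hcyc : c'.IsCycle := hc.isCycle.rotate hxc
  have hlen : c'.length = c.length := by
    have h1 := congrArg Walk.length (take_spec c hxc)
    rw [length_append] at h1
    rw [hc'def]
    unfold Walk.rotate
    rw [length_append]
    omega
  have hcard : c.length = Fintype.card V := hc.length_eq
  have hmemtail : ∀ z : V, z ∈ c'.support.tail := by
    intro z
    have h1 : z ∈ c.tail.support := (hc.isHamiltonian_tail).mem_support z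
    rw [support_tail_of_not_nil _ hc.isCycle.not_nil] at h1
    exact (support_rotate c x hxc).mem_iff.mpr h1
  have hyc' : y ∈ c'.support := List.mem_of_mem_tail (hmemtail y)
  set q1 := c'.takeUntil y hyc' with hq1def
  set q2 := c'.dropUntil y hyc' with hq2def
  have hspec : q1.append q2 = c' := take_spec c' hyc'
  have hsupp : c'.support = q1.support ++ q2.support.tail := by
    rw [← hspec, support_append]
  have hT : c'.support = x :: c'.support.tail := support_eq_cons c'
  have hq1s : q1.support = x :: q1.support.tail := support_eq_cons q1
  have hTeq : c'.support.tail = q1.support.tail ++ q2.support.tail := by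
    have := hsupp
    rw [hT, hq1s] at this
    have := congrArg List.tail this
    rwa [List.tail_cons, List.cons_append, List.tail_cons] at this
  have hTnodup : c'.support.tail.Nodup := hcyc.support_nodup
  rw [hTeq] at hTnodup
  obtain ⟨hn1, hn2, hdisj⟩ := List.nodup_append.mp hTnodup
  have hq2nil : ¬ q2.Nil := not_nil_of_ne (Ne.symm hx)
  have hq1nil : ¬ q1.Nil := not_nil_of_ne hx
  have hxq2 : x ∈ q2.support.tail := by
    have hxe : x ∈ q2.support := end_mem_support q2
    rw [support_eq_cons q2] at hxe
    rcases List.mem_cons.mp hxe with h | h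
    · exact absurd h hx
    · exact h
  have hyq1 : y ∈ q1.support.tail := by
    have hye : y ∈ q1.support := end_mem_support q1
    rw [hq1s] at hye
    rcases List.mem_cons.mp hye with h | h
    · exact absurd h.symm hx
    · exact h
  have hq1path : q1.IsPath := by
    apply IsPath.mk'
    rw [hq1s]
    refine List.Nodup.cons (fun hmem => ?_) hn1
    exact hdisj _ hmem _ hxq2 rfl
  have hq2path : q2.IsPath := by
    apply IsPath.mk'
    rw [support_eq_cons q2]
    refine List.Nodup.cons (fun hmem => ?_) hn2
    exact hdisj _ hyq1 _ hmem rfl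
  refine ⟨q1, q2, hq1path, hq2path, ?_, ?_, ?_⟩
  · have := congrArg Walk.length hspec
    rw [length_append] at this
    omega
  · intro z
    have hz : z ∈ c'.support := List.mem_of_mem_tail (hmemtail z)
    rw [hsupp] at hz
    rcases List.mem_append.mp hz with h | h
    · exact Or.inl h
    · exact Or.inr (List.mem_of_mem_tail h)
  · intro z hz1 hz2
    rw [support_eq_cons q2] at hz2
    rcases List.mem_cons.mp hz2 with rfl | hz2'
    · exact Or.inr rfl
    · rw [hq1s] at hz1
      rcases List.mem_cons.mp hz1 with rfl | hz1'
      · exact Or.inl rfl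
      · exact absurd hz2' (fun h => hdisj _ hz1' _ h rfl)

end SimpleGraph


namespace SimpleGraph
variable {V : Type*} {H H' : SimpleGraph V}

open Walk

lemma split_at_edge {s s' : V}
    (hsub : H'.edgeSet ⊆ insert s(s,s') H.edgeSet) :
    ∀ {x y : V} (Q : H'.Walk x y), Q.IsPath → s(s,s') ∈ Q.edges →
    (∃ (P1 : H.Walk x s) (P2 : H.Walk s' y), P1.IsPath ∧ P2.IsPath ∧
       (∀ t ∈ P1.support, t ∉ P2.support) ∧ P1.length + P2.length + 1 = Q.length ∧
       (∀ t ∈ P1.support, t ∈ Q.support) ∧ (∀ t ∈ P2.support, t ∈ Q.support)) ∨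
    (∃ (P1 : H.Walk x s') (P2 : H.Walk s y), P1.IsPath ∧ P2.IsPath ∧
       (∀ t ∈ P1.support, t ∉ P2.support) ∧ P1.length + P2.length + 1 = Q.length ∧
       (∀ t ∈ P1.support, t ∈ Q.support) ∧ (∀ t ∈ P2.support, t ∈ Q.support)) := by
  intro x y Q
  induction Q with
  | nil => intro _ hedge; simp at hedge
  | @cons x b y hadj Q' ih =>
    intro hpath hedge
    rw [cons_isPath_iff] at hpath
    obtain ⟨hQ'path, hxQ'⟩ := hpath
    rw [edges_cons, List.mem_cons] at hedge
    rcases hedge with hhead | htail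
    · -- first edge is the special edge
      have hQ'noedge : s(s,s') ∉ Q'.edges := by
        intro hmem
        have hnodup : (Walk.cons hadj Q').edges.Nodup :=
          (cons_isPath_iff hadj Q' |>.mpr ⟨hQ'path, hxQ'⟩).isTrail.edges_nodup
        rw [edges_cons, List.nodup_cons] at hnodup
        rw [hhead] at hmem
        exact hnodup.1 hmem
      have hQ'sub : ∀ e ∈ Q'.edges, e ∈ H.edgeSet := by
        intro e he
        have := hsub (Q'.edges_subset_edgeSet he)
        rcases Set.mem_insert_iff.mp this with rfl | h
        · exact absurd he hQ'noedge
        · exact h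
      rcases Sym2.eq_iff.mp hhead with ⟨hxs, hbs⟩ | ⟨hxs, hbs⟩
      · subst hxs; subst hbs
        left
        refine ⟨Walk.nil, Q'.transfer H hQ'sub, IsPath.nil, hQ'path.transfer _, ?_, ?_, ?_, ?_⟩
        · intro t ht
          rw [support_nil, List.mem_singleton] at ht
          subst ht
          rw [support_transfer]
          exact hxQ'
        · simp [length_transfer]
        · intro t ht
          rw [support_nil, List.mem_singleton] at ht
          subst ht
          exact start_mem_support _
        · intro t ht
          rw [support_transfer] at ht
          rw [support_cons]
          exact List.mem_cons_of_mem _ ht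
      · subst hxs; subst hbs
        right
        refine ⟨Walk.nil, Q'.transfer H hQ'sub, IsPath.nil, hQ'path.transfer _, ?_, ?_, ?_, ?_⟩
        · intro t ht
          rw [support_nil, List.mem_singleton] at ht
          subst ht
          rw [support_transfer]
          exact hxQ'
        · simp [length_transfer]
        · intro t ht
          rw [support_nil, List.mem_singleton] at ht
          subst ht
          exact start_mem_support _
        · intro t ht
          rw [support_transfer] at ht
          rw [support_cons]
          exact List.mem_cons_of_mem _ ht
    · -- special edge is in the tail
      have hadjH : H.Adj x b := by
        have hmem' : s(x,b) ∈ H'.edgeSet := hadj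
        rcases Set.mem_insert_iff.mp (hsub hmem') with heq | h
        · exfalso
          have hnodup : (Walk.cons hadj Q').edges.Nodup :=
            (cons_isPath_iff hadj Q' |>.mpr ⟨hQ'path, hxQ'⟩).isTrail.edges_nodup
          rw [edges_cons, List.nodup_cons] at hnodup
          rw [← heq] at htail
          exact hnodup.1 htail
        · exact h
      rcases ih hQ'path htail with ⟨P1', P2', h1, h2, h3, h4, h5, h6⟩ | ⟨P1', P2', h1, h2, h3, h4, h5, h6⟩
      · left
        refine ⟨Walk.cons hadjH P1', P2', ?_, h2, ?_, ?_, ?_, ?_⟩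
        · rw [cons_isPath_iff]
          exact ⟨h1, fun hmem => hxQ' (h5 _ hmem)⟩
        · intro t ht
          rw [support_cons, List.mem_cons] at ht
          rcases ht with rfl | ht'
          · exact fun hmem => hxQ' (h6 _ hmem)
          · exact h3 t ht'
        · simp only [length_cons]; omega
        · intro t ht
          rw [support_cons, List.mem_cons] at ht
          rw [support_cons]
          rcases ht with rfl | ht'
          · exact List.mem_cons_self
          · exact List.mem_cons_of_mem _ (h5 _ ht')
        · intro t ht
          rw [support_cons]
          exact List.mem_cons_of_mem _ (h6 _ ht)
      · right
        refine ⟨Walk.cons hadjH P1', P2', ?_, h2, ?_, ?_, ?_, ?_⟩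
        · rw [cons_isPath_iff]
          exact ⟨h1, fun hmem => hxQ' (h5 _ hmem)⟩
        · intro t ht
          rw [support_cons, List.mem_cons] at ht
          rcases ht with rfl | ht'
          · exact fun hmem => hxQ' (h6 _ hmem)
          · exact h3 t ht'
        · simp only [length_cons]; omega
        · intro t ht
          rw [support_cons, List.mem_cons] at ht
          rw [support_cons]
          rcases ht with rfl | ht'
          · exact List.mem_cons_self
          · exact List.mem_cons_of_mem _ (h5 _ ht')
        · intro t ht
          rw [support_cons]
          exact List.mem_cons_of_mem _ (h6 _ ht)

end SimpleGraph


namespace SimpleGraph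
open Walk
variable {V : Type*} [Fintype V] [DecidableEq V]

lemma ore_contradiction {H : SimpleGraph V} [DecidableRel H.Adj]
    {x y s s' : V} {r : ℕ}
    (P1 : H.Walk x s) (P2 : H.Walk s' y)
    (h1 : P1.IsPath) (h2 : P2.IsPath)
    (hdisj : ∀ t ∈ P1.support, t ∉ P2.support)
    (hnadj : ¬ H.Adj s s')
    (hbad : ∀ Q : H.Walk x y, Q.IsPath → Q.length < r)
    (hr : r ≤ P1.length + P2.length + 1)
    (hdeg : Fintype.card V + 1 ≤ H.degree s + H.degree s') : False := by
  set p := P1.length with hp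
  set q := P2.length with hq
  set L := p + q + 1 with hL
  set w : ℕ → V := fun i => if i ≤ p then P1.getVert i else P2.getVert (i - (p+1)) with hwdef
  have hw_le : ∀ i, i ≤ p → w i = P1.getVert i := fun i hi => if_pos hi
  have hw_gt : ∀ i, p < i → w i = P2.getVert (i - (p+1)) := fun i hi => if_neg (by omega)
  have hwp : w p = s := by rw [hw_le p le_rfl, hp]; exact P1.getVert_length
  have hwp1 : w (p+1) = s' := by
    rw [hw_gt (p+1) (by omega)]
    simp only [Nat.add_sub_cancel_left, Nat.sub_self]
    exact P2.getVert_zero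
  have hmem1 : ∀ i, i ≤ p → w i ∈ P1.support := by
    intro i hi; rw [hw_le i hi]; exact P1.getVert_mem_support' i
  have hmem2 : ∀ i, p < i → w i ∈ P2.support := by
    intro i hi; rw [hw_gt i hi]; exact P2.getVert_mem_support' _
  have hinj : ∀ i, i ≤ L → ∀ j, j ≤ L → w i = w j → i = j := by
    intro i hi j hj hij
    by_cases hip : i ≤ p <;> by_cases hjp : j ≤ p
    · rw [hw_le i hip, hw_le j hjp] at hij
      exact getVert_injOn' h1 i (by omega) j (by omega) hij
    · exfalso; rw [hw_le i hip] at hij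
      exact hdisj _ (hij ▸ P1.getVert_mem_support' i) (hmem2 j (by omega))
    · exfalso; rw [hw_le j hjp] at hij
      exact hdisj _ (hij ▸ P1.getVert_mem_support' j) (hmem2 i (by omega))
    · rw [hw_gt i (by omega), hw_gt j (by omega)] at hij
      have := getVert_injOn' h2 (i - (p+1)) (by omega) (j - (p+1)) (by omega) hij
      omega
  -- no common neighbour off the two paths
  have nowin1 : ∀ z, z ∉ P1.support → z ∉ P2.support → H.Adj s z → H.Adj z s' → False := by
    intro z hz1 hz2 ha hb
    have hX : ((P1.append (Walk.cons ha (Walk.cons hb P2)))).IsPath := by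
      apply IsPath.mk'
      rw [support_append, support_cons, support_cons, List.tail_cons]
      apply List.Nodup.append h1.support_nodup
      · rw [List.nodup_cons]
        exact ⟨hz2, h2.support_nodup⟩
      · intro t ht htz
        rcases List.mem_cons.mp htz with rfl | ht2
        · exact hz1 ht
        · exact hdisj t ht ht2
    have := hbad _ hX
    rw [length_append, length_cons, length_cons] at this
    omega
  -- no "rotation" win
  have nowin2 : ∀ j, 1 ≤ j → j ≤ L → H.Adj s (w (j-1)) → H.Adj s' (w j) → False := by
    intro j hj1 hjL ha hb
    rcases lt_trichotomy j p with hcase | hcase | hcase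
    · -- surgery in P1
      have hji : j - 1 < p := by omega
      rw [hw_le (j-1) (by omega)] at ha
      rw [hw_le j (by omega)] at hb
      -- replace j-1 by i
      obtain ⟨i, rfl⟩ : ∃ i, j = i + 1 := ⟨j - 1, by omega⟩
      simp only [Nat.add_sub_cancel] at ha hji
      have hi1 : i + 1 ≤ p := by omega
      have hX : (((P1.wtake i).append (Walk.cons ha.symm
          (((P1.wdrop (i+1)).reverse).append (Walk.cons hb.symm P2))))).IsPath := by
        apply IsPath.mk'
        rw [support_append, support_cons, List.tail_cons, support_append, support_reverse,
            support_cons]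
        have hsplit : P1.support = (P1.wtake i).support ++ (P1.wdrop (i+1)).support :=
          support_eq_wtake_wdrop' P1 (by omega)
        have hnd := h1.support_nodup
        rw [hsplit] at hnd
        obtain ⟨hndT, hndD, hdisjTD⟩ := List.nodup_append.mp hnd
        have htail : ((P1.getVert (i+1)) :: P2.support).tail = P2.support := List.tail_cons
        rw [htail]
        apply List.Nodup.append hndT
        · apply List.Nodup.append (List.nodup_reverse.mpr hndD) h2.support_nodup
          intro t ht ht2
          exact hdisj t (support_wdrop_subset P1 (i+1) t (List.mem_reverse.mp ht)) ht2
        · intro t ht htm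
          rcases List.mem_append.mp htm with ht2 | ht2
          · exact hdisjTD _ ht _ (List.mem_reverse.mp ht2) rfl
          · exact hdisj t (support_wtake_subset P1 i t ht) ht2
      have hlen := hbad _ hX
      rw [length_append, length_cons, length_append, length_cons, length_reverse,
          length_wtake P1 (by omega : i ≤ P1.length), length_wdrop] at hlen
      omega
    · -- j = p : adjacency s' s contradicts hnadj
      subst hcase
      rw [hwp] at hb
      exact hnadj hb.symm
    · -- j > p
      rcases Nat.lt_or_ge (p+1) j with hcase2 | hcase2
      · -- j ≥ p + 2, surgery in P2
        rw [hw_gt (j-1) (by omega)] at ha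
        rw [hw_gt j (by omega)] at hb
        set k := j - 1 - (p+1) with hk
        have hjk : j - (p+1) = k + 1 := by omega
        rw [hjk] at hb
        by_cases hk0 : k = 0
        · rw [hk0] at ha
          rw [P2.getVert_zero] at ha
          exact hnadj ha
        · have hkq : k + 1 ≤ q := by omega
          have hX : ((P1.append (Walk.cons ha
              (((P2.wtake k).reverse).append (Walk.cons hb (P2.wdrop (k+1))))))).IsPath := by
            apply IsPath.mk'
            rw [support_append, support_cons, List.tail_cons, support_append, support_reverse,
                support_cons]
            have hsplit : P2.support = (P2.wtake k).support ++ (P2.wdrop (k+1)).support :=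
              support_eq_wtake_wdrop' P2 (by omega)
            have hnd := h2.support_nodup
            rw [hsplit] at hnd
            obtain ⟨hndT, hndD, hdisjTD⟩ := List.nodup_append.mp hnd
            rw [List.tail_cons]
            apply List.Nodup.append h1.support_nodup
            · apply List.Nodup.append (List.nodup_reverse.mpr hndT) hndD
              intro t ht ht2
              exact hdisjTD _ (List.mem_reverse.mp ht) _ ht2 rfl
            · intro t ht htm
              rcases List.mem_append.mp htm with ht2 | ht2
              · exact hdisj t ht (support_wtake_subset P2 k t (List.mem_reverse.mp ht2))
              · exact hdisj t ht (support_wdrop_subset P2 (k+1) t ht2)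
          have hlen := hbad _ hX
          rw [length_append, length_cons, length_append, length_cons, length_reverse,
              length_wtake P2 (by omega : k ≤ P2.length), length_wdrop] at hlen
          omega
      · -- j = p + 1
        have : j = p + 1 := by omega
        subst this
        simp only [Nat.add_sub_cancel] at ha
        rw [hwp] at ha
        exact H.irrefl ha
  -- the counting
  classical
  set n := Fintype.card V with hn
  set Wimg : Finset V := (Finset.range (L+1)).image w with hWimgdef
  have hWcard : Wimg.card = L + 1 := by
    rw [hWimgdef, Finset.card_image_of_injOn, Finset.card_range]
    intro i hi j hj hij
    simp only [Finset.coe_range, Set.mem_Iio] at hi hj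
    exact hinj i (by omega) j (by omega) hij
  have hsuppW : ∀ z, (z ∈ P1.support ∨ z ∈ P2.support) → z ∈ Wimg := by
    intro z hz
    rw [hWimgdef, Finset.mem_image]
    rcases hz with hz | hz
    · obtain ⟨m, hm, hmle⟩ := Walk.mem_support_iff_exists_getVert.mp hz
      exact ⟨m, Finset.mem_range.mpr (by omega), by rw [hw_le m (by omega)]; exact hm⟩
    · obtain ⟨m, hm, hmle⟩ := Walk.mem_support_iff_exists_getVert.mp hz
      refine ⟨m + (p+1), Finset.mem_range.mpr (by omega), ?_⟩
      rw [hw_gt _ (by omega)]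
      simpa using hm
  set S1 : Finset ℕ := (Finset.range (L+1)).filter (fun i => H.Adj s (w i)) with hS1def
  set S2 : Finset ℕ := (Finset.range (L+1)).filter (fun i => H.Adj s' (w i)) with hS2def
  have c1 : S1.card = (H.neighborFinset s ∩ Wimg).card := by
    apply Finset.card_bij (fun i _ => w i)
    · intro i hi
      rw [hS1def, Finset.mem_filter, Finset.mem_range] at hi
      rw [Finset.mem_inter, mem_neighborFinset]
      exact ⟨hi.2, Finset.mem_image.mpr ⟨i, Finset.mem_range.mpr hi.1, rfl⟩⟩
    · intro i hi j hj hij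
      rw [hS1def, Finset.mem_filter, Finset.mem_range] at hi hj
      exact hinj i (by omega) j (by omega) hij
    · intro t ht
      rw [Finset.mem_inter, mem_neighborFinset, hWimgdef, Finset.mem_image] at ht
      obtain ⟨hadj, i, hi, rfl⟩ := ht
      exact ⟨i, Finset.mem_filter.mpr ⟨hi, hadj⟩, rfl⟩
  have c2 : S2.card = (H.neighborFinset s' ∩ Wimg).card := by
    apply Finset.card_bij (fun i _ => w i)
    · intro i hi
      rw [hS2def, Finset.mem_filter, Finset.mem_range] at hi
      rw [Finset.mem_inter, mem_neighborFinset]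
      exact ⟨hi.2, Finset.mem_image.mpr ⟨i, Finset.mem_range.mpr hi.1, rfl⟩⟩
    · intro i hi j hj hij
      rw [hS2def, Finset.mem_filter, Finset.mem_range] at hi hj
      exact hinj i (by omega) j (by omega) hij
    · intro t ht
      rw [Finset.mem_inter, mem_neighborFinset, hWimgdef, Finset.mem_image] at ht
      obtain ⟨hadj, i, hi, rfl⟩ := ht
      exact ⟨i, Finset.mem_filter.mpr ⟨hi, hadj⟩, rfl⟩
  have c3 : S1.card + S2.card ≤ L + 1 := by
    set S1' : Finset ℕ := S1.image (· + 1) with hS1'def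
    have hc1' : S1'.card = S1.card :=
      Finset.card_image_of_injective _ (fun a b => by omega)
    have hsub : S1' ∪ S2 ⊆ (Finset.range (L+2)).erase (p+1) := by
      intro j hj
      rcases Finset.mem_union.mp hj with hj | hj
      · rw [hS1'def, Finset.mem_image] at hj
        obtain ⟨i, hi, rfl⟩ := hj
        rw [hS1def, Finset.mem_filter, Finset.mem_range] at hi
        rw [Finset.mem_erase, Finset.mem_range]
        refine ⟨?_, by omega⟩
        intro hip
        have : i = p := by omega
        subst this
        rw [hwp] at hi
        exact H.irrefl hi.2
      · rw [hS2def, Finset.mem_filter, Finset.mem_range] at hj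
        rw [Finset.mem_erase, Finset.mem_range]
        refine ⟨?_, by omega⟩
        rintro rfl
        rw [hwp1] at hj
        exact H.irrefl hj.2
    have hdisjS : Disjoint S1' S2 := by
      rw [Finset.disjoint_left]
      intro j hj1 hj2
      rw [hS1'def, Finset.mem_image] at hj1
      obtain ⟨i, hi, rfl⟩ := hj1
      rw [hS1def, Finset.mem_filter, Finset.mem_range] at hi
      rw [hS2def, Finset.mem_filter, Finset.mem_range] at hj2
      have : i + 1 - 1 = i := by omega
      exact nowin2 (i+1) (by omega) (by omega) (by rw [this]; exact hi.2) hj2.2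
    have := Finset.card_le_card hsub
    rw [Finset.card_union_of_disjoint hdisjS] at this
    rw [Finset.card_erase_of_mem (Finset.mem_range.mpr (by omega)), Finset.card_range] at this
    omega
  have c4 : ((H.neighborFinset s) \ Wimg).card + ((H.neighborFinset s') \ Wimg).card ≤ n - (L+1) := by
    have hdisjoff : Disjoint ((H.neighborFinset s) \ Wimg) ((H.neighborFinset s') \ Wimg) := by
      rw [Finset.disjoint_left]
      intro z hz1 hz2
      rw [Finset.mem_sdiff, mem_neighborFinset] at hz1 hz2
      have hz1' : z ∉ P1.support := fun hmem => hz1.2 (hsuppW z (Or.inl hmem))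
      have hz2' : z ∉ P2.support := fun hmem => hz1.2 (hsuppW z (Or.inr hmem))
      exact nowin1 z hz1' hz2' hz1.1 hz2.1.symm
    have hsuboff : ((H.neighborFinset s) \ Wimg) ∪ ((H.neighborFinset s') \ Wimg) ⊆
        Finset.univ \ Wimg := by
      intro z hz
      rcases Finset.mem_union.mp hz with hz | hz <;>
        · rw [Finset.mem_sdiff] at hz
          exact Finset.mem_sdiff.mpr ⟨Finset.mem_univ _, hz.2⟩
    have := Finset.card_le_card hsuboff
    rw [Finset.card_union_of_disjoint hdisjoff, Finset.card_sdiff_of_subset (Finset.subset_univ _),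
        Finset.card_univ, hWcard] at this
    omega
  have hLn : L + 1 ≤ n := by
    have := Finset.card_le_univ Wimg
    rw [hWcard] at this
    omega
  have hsplit1 : H.degree s = (H.neighborFinset s ∩ Wimg).card + ((H.neighborFinset s) \ Wimg).card := by
    rw [degree, ← Finset.card_inter_add_card_sdiff]
  have hsplit2 : H.degree s' = (H.neighborFinset s' ∩ Wimg).card + ((H.neighborFinset s') \ Wimg).card := by
    rw [degree, ← Finset.card_inter_add_card_sdiff]
  omega

end SimpleGraph


namespace SimpleGraph.Walk
variable {V : Type*} [DecidableEq V] {G : SimpleGraph V}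

lemma isPath_of_append_left {u v w : V} {p : G.Walk u v} {q : G.Walk v w}
    (h : (p.append q).IsPath) : p.IsPath := by
  apply IsPath.mk'
  have := h.support_nodup
  rw [support_append] at this
  exact (List.nodup_append.mp this).1

lemma isPath_of_append_right {u v w : V} {p : G.Walk u v} {q : G.Walk v w}
    (h : (p.append q).IsPath) : q.IsPath := by
  apply IsPath.mk'
  have hnd := h.support_nodup
  rw [support_append] at hnd
  obtain ⟨h1, h2, h3⟩ := List.nodup_append.mp hnd
  rw [support_eq_cons q]
  refine List.Nodup.cons (fun hmem => ?_) h2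
  exact h3 _ (p.end_mem_support) _ hmem rfl

lemma end_mem_tail_support' {u v : V} (p : G.Walk u v) (hp : ¬ p.Nil) :
    v ∈ p.support.tail := by
  cases p with
  | nil => exact absurd Walk.nil_nil hp
  | cons h q => rw [support_cons, List.tail_cons]; exact q.end_mem_support

lemma mem_takeUntil_mem_dropUntil_eq {u v w : V} {p : G.Walk u v} (hp : p.IsPath)
    (hw : w ∈ p.support) {t : V} (h1 : t ∈ (p.takeUntil w hw).support)
    (h2 : t ∈ (p.dropUntil w hw).support) : t = w := by
  have hnd := hp.support_nodup
  rw [← take_spec p hw, support_append] at hnd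
  obtain ⟨_, _, h3⟩ := List.nodup_append.mp hnd
  rw [support_eq_cons (p.dropUntil w hw)] at h2
  rcases List.mem_cons.mp h2 with rfl | h2'
  · rfl
  · exact absurd h2' (fun h => h3 _ h1 _ h rfl)

end SimpleGraph.Walk

namespace SimpleGraph
open Walk
variable {V : Type*} [DecidableEq V]

lemma build_B {H : SimpleGraph V} {K : Finset V} {r : ℕ} (hKcard : K.card = r)
    (hclq : ∀ a ∈ K, ∀ b ∈ K, a ≠ b → H.Adj a b)
    {u u' : V} (W : H.Walk u u') (hW : W.IsPath) (huK : u ∉ K) (hu'K : u' ∈ K)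
    (hk : ∃ k, k ∈ K ∧ k ≠ u' ∧ k ∈ W.support) :
    ∃ Q : H.Walk u u', Q.IsPath ∧ r ≤ Q.length := by
  obtain ⟨k0, hk0K, hk0ne, hk0W⟩ := hk
  have hex : ∃ t ∈ W.support, t ∈ K.erase u' :=
    ⟨k0, hk0W, Finset.mem_erase.mpr ⟨hk0ne, hk0K⟩⟩
  obtain ⟨k1, R, Rem, hk1S, happ, hfirst⟩ := W.exists_firstHit (· ∈ K.erase u') hex
  obtain ⟨hk1ne, hk1K⟩ := Finset.mem_erase.mp hk1S
  have hWdecomp : W.support = R.support ++ Rem.support.tail := by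
    rw [← happ, support_append]
  have hnd := hW.support_nodup
  rw [hWdecomp] at hnd
  obtain ⟨hndR, hndRem, hdisjRR⟩ := List.nodup_append.mp hnd
  have hRpath : R.IsPath := by
    rw [← happ] at hW
    exact Walk.isPath_of_append_left hW
  have hu'R : u' ∉ R.support := by
    intro hmem
    by_cases hnil : Rem.Nil
    · exact hk1ne (Walk.Nil.eq hnil) |>.elim
    · exact hdisjRR _ hmem _ (Rem.end_mem_tail_support' hnil) rfl
  obtain ⟨CP, hCPpath, hCPlen, hCPsupp⟩ :=
    exists_cliquePath r K hKcard hclq k1 u' hk1K hu'K hk1ne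
  refine ⟨R.append CP, ?_, ?_⟩
  · apply Walk.isPath_append_of_disj hRpath hCPpath
    intro t ht hct
    have htK : t ∈ K := (hCPsupp t).mp hct
    have htne : t ≠ u' := fun h => hu'R (h ▸ ht)
    exact hfirst t ht (Finset.mem_erase.mpr ⟨htne, htK⟩)
  · have hRlen : 0 < R.length := by
      have hne : u ≠ k1 := fun h => huK (h ▸ hk1K)
      have := Walk.not_nil_of_ne (p := R) hne
      rwa [Walk.not_nil_iff_lt_length] at this
    rw [length_append]
    omega

end SimpleGraph

namespace SimpleGraph
open Walk
variable {V : Type*} [DecidableEq V]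

lemma build_A {H : SimpleGraph V} {K : Finset V} {r : ℕ} (hKcard : K.card = r)
    (hclq : ∀ a ∈ K, ∀ b ∈ K, a ≠ b → H.Adj a b)
    {u u' : V} (W : H.Walk u u') (hW : W.IsPath) (huK : u ∉ K) (hu'K : u' ∉ K)
    (hk : ∃ k k', k ∈ K ∧ k' ∈ K ∧ k ≠ k' ∧ k ∈ W.support ∧ k' ∈ W.support) :
    ∃ Q : H.Walk u u', Q.IsPath ∧ r ≤ Q.length := by
  obtain ⟨k0, k0', hk0K, hk0'K, hk0ne, hk0W, hk0'W⟩ := hk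
  obtain ⟨k1, R, Rem, hk1K, happ, hfirst⟩ :=
    W.exists_firstHit (· ∈ K) ⟨k0, hk0W, hk0K⟩
  have hWdecomp : W.support = R.support ++ Rem.support.tail := by
    rw [← happ, support_append]
  have hnd := hW.support_nodup
  rw [hWdecomp] at hnd
  obtain ⟨hndR, hndRem, hdisjRR⟩ := List.nodup_append.mp hnd
  have hRpath : R.IsPath := by rw [← happ] at hW; exact Walk.isPath_of_append_left hW
  have hRempath : Rem.IsPath := by rw [← happ] at hW; exact Walk.isPath_of_append_right hW
  -- a second special vertex, different from k1, lies on W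
  have hsecond : ∃ t0, t0 ∈ K ∧ t0 ≠ k1 ∧ t0 ∈ W.support := by
    rcases eq_or_ne k0 k1 with rfl | hne
    · exact ⟨k0', hk0'K, fun h => hk0ne h.symm, hk0'W⟩
    · exact ⟨k0, hk0K, hne, hk0W⟩
  obtain ⟨t0, ht0K, ht0ne, ht0W⟩ := hsecond
  have ht0Rem : t0 ∈ Rem.support := by
    rw [hWdecomp] at ht0W
    rcases List.mem_append.mp ht0W with h | h
    · exact absurd (hfirst t0 h ht0K) ht0ne
    · exact List.mem_of_mem_tail h
  have hRrevpath : Rem.reverse.IsPath := hRempath.reverse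
  obtain ⟨k2, R2, Rem2, hk2K, happ2, hfirst2⟩ :=
    Rem.reverse.exists_firstHit (· ∈ K)
      ⟨t0, by rw [support_reverse, List.mem_reverse]; exact ht0Rem, ht0K⟩
  have hR2path : R2.IsPath := by
    rw [← happ2] at hRrevpath; exact Walk.isPath_of_append_left hRrevpath
  have hRrevdecomp : Rem.reverse.support = R2.support ++ Rem2.support.tail := by
    rw [← happ2, support_append]
  have hnd2 : (R2.support ++ Rem2.support.tail).Nodup := by
    rw [← hRrevdecomp]; exact (hRempath.reverse).support_nodup
  obtain ⟨hndR2, hndRem2, hdisjR2⟩ := List.nodup_append.mp hnd2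
  have hR2sub : ∀ t ∈ R2.support, t ∈ Rem.support := by
    intro t ht
    have h1 : t ∈ Rem.reverse.support := by
      rw [hRrevdecomp]; exact List.mem_append.mpr (Or.inl ht)
    rw [support_reverse, List.mem_reverse] at h1
    exact h1
  have hk2ne : k2 ≠ k1 := by
    intro heq
    subst heq
    by_cases hnil : Rem2.Nil
    · have ht0Rrev : t0 ∈ Rem.reverse.support := by
        rw [support_reverse, List.mem_reverse]; exact ht0Rem
      rw [hRrevdecomp] at ht0Rrev
      have ht0R2 : t0 ∈ R2.support := by
        rcases List.mem_append.mp ht0Rrev with h | h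
        · exact h
        · exfalso
          have hlen0 : Rem2.length = 0 := Walk.nil_iff_length_eq.mp hnil
          have hsl : Rem2.support.length = 1 := by rw [Walk.length_support, hlen0]
          obtain ⟨a, ha⟩ := List.length_eq_one_iff.mp hsl
          rw [ha] at h
          simp at h
      exact ht0ne (hfirst2 t0 ht0R2 ht0K)
    · exact hdisjR2 _ R2.end_mem_support _ (Rem2.end_mem_tail_support' hnil) rfl
  obtain ⟨CP, hCPpath, hCPlen, hCPsupp⟩ :=
    exists_cliquePath r K hKcard hclq k1 k2 hk1K hk2K (Ne.symm hk2ne)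
  refine ⟨R.append (CP.append R2.reverse), ?_, ?_⟩
  · apply Walk.isPath_append_of_disj hRpath
    · apply Walk.isPath_append_of_disj hCPpath hR2path.reverse
      intro t htc htr
      rw [support_reverse, List.mem_reverse] at htr
      exact hfirst2 t htr ((hCPsupp t).mp htc)
    · intro t htR htc
      rw [support_append] at htc
      rcases List.mem_append.mp htc with h | h
      · exact hfirst t htR ((hCPsupp t).mp h)
      · have htR2 : t ∈ R2.support := by
          rw [support_reverse] at h
          exact List.mem_reverse.mp (List.mem_of_mem_tail h)
        have htRem : t ∈ Rem.support := hR2sub t htR2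
        rw [Rem.support_eq_cons] at htRem
        rcases List.mem_cons.mp htRem with rfl | htail
        · rfl
        · exact absurd htail (fun h => hdisjRR _ htR _ h rfl)
  · have hRlen : 0 < R.length := by
      have hne : u ≠ k1 := fun h => huK (h ▸ hk1K)
      have := Walk.not_nil_of_ne (p := R) hne
      rwa [Walk.not_nil_iff_lt_length] at this
    have hR2len : 0 < R2.length := by
      have hne : u' ≠ k2 := fun h => hu'K (h ▸ hk2K)
      have := Walk.not_nil_of_ne (p := R2) hne
      rwa [Walk.not_nil_iff_lt_length] at this
    rw [length_append, length_append, length_reverse]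
    omega

end SimpleGraph

namespace SimpleGraph
open Walk
variable {V : Type*} [DecidableEq V]

/-- The core construction when both endpoints are special. -/
lemma build_C_core {H : SimpleGraph V} {K : Finset V} {r : ℕ} (hKcard : K.card = r)
    (hclq : ∀ a ∈ K, ∀ b ∈ K, a ≠ b → H.Adj a b) (hr3 : 3 ≤ r)
    {x y s z k' : V} (hxK : x ∈ K) (hyK : y ∈ K) (hxy : x ≠ y)
    (hsK : s ∈ K) (hsx : s ≠ x) (hsy : s ≠ y) (hzK : z ∉ K) (hsz : H.Adj s z)
    (Q : H.Walk z k') (hQpath : Q.IsPath) (hk'K : k' ∈ K) (hk's : k' ≠ s)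
    (hQfirst : ∀ t ∈ Q.support, t ∈ K → t = k') :
    ∃ X : H.Walk x y, X.IsPath ∧ r ≤ X.length := by
  have hsQ : s ∉ Q.support := fun hmem => hk's (hQfirst s hmem hsK).symm
  have hzk' : z ≠ k' := fun h => hzK (h ▸ hk'K)
  have hQlen : 0 < Q.length := by
    have := Walk.not_nil_of_ne (p := Q) hzk'
    rwa [Walk.not_nil_iff_lt_length] at this
  rcases eq_or_ne k' y with rfl | hk'y
  · -- k' = y : path  x →CP(K∖y)→ s → z →Q→ y
    obtain ⟨CP, hCPpath, hCPlen, hCPsupp⟩ :=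
      exists_cliquePath (r-1) (K.erase k') (by rw [Finset.card_erase_of_mem hyK, hKcard])
        (fun a ha b hb hab => hclq a (Finset.mem_of_mem_erase ha) b (Finset.mem_of_mem_erase hb) hab)
        x s (Finset.mem_erase.mpr ⟨hxy, hxK⟩) (Finset.mem_erase.mpr ⟨hsy, hsK⟩) (Ne.symm hsx)
    refine ⟨CP.append (Walk.cons hsz Q), ?_, ?_⟩
    · apply Walk.isPath_append_of_disj hCPpath
      · rw [Walk.cons_isPath_iff]
        exact ⟨hQpath, hsQ⟩
      · intro t htc htq
        have htK : t ∈ K.erase k' := (hCPsupp t).mp htc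
        rw [support_cons, List.mem_cons] at htq
        rcases htq with rfl | htq'
        · rfl
        · exact absurd ((Finset.mem_erase.mp htK).1)
            (by simp [hQfirst t htq' (Finset.mem_of_mem_erase htK)])
    · rw [length_append, length_cons]
      rw [Finset.card_erase_of_mem hyK, hKcard] at hCPlen
      omega
  · rcases eq_or_ne k' x with rfl | hk'x
    · -- k' = x : path y →CP(K∖x)→ s → z →Q→ x, then reverse
      obtain ⟨CP, hCPpath, hCPlen, hCPsupp⟩ :=
        exists_cliquePath (r-1) (K.erase k') (by rw [Finset.card_erase_of_mem hxK, hKcard])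
          (fun a ha b hb hab => hclq a (Finset.mem_of_mem_erase ha) b (Finset.mem_of_mem_erase hb) hab)
          y s (Finset.mem_erase.mpr ⟨Ne.symm hxy, hyK⟩) (Finset.mem_erase.mpr ⟨hsx, hsK⟩) (Ne.symm hsy)
      have hX : (CP.append (Walk.cons hsz Q)).IsPath := by
        apply Walk.isPath_append_of_disj hCPpath
        · rw [Walk.cons_isPath_iff]
          exact ⟨hQpath, hsQ⟩
        · intro t htc htq
          have htK : t ∈ K.erase k' := (hCPsupp t).mp htc
          rw [support_cons, List.mem_cons] at htq
          rcases htq with rfl | htq'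
          · rfl
          · exact absurd ((Finset.mem_erase.mp htK).1)
              (by simp [hQfirst t htq' (Finset.mem_of_mem_erase htK)])
      refine ⟨(CP.append (Walk.cons hsz Q)).reverse, hX.reverse, ?_⟩
      rw [length_reverse, length_append, length_cons]
      rw [Finset.card_erase_of_mem hxK, hKcard] at hCPlen
      omega
    · -- k' ∉ {x, y} : path x →CP(K∖{y,k'})→ s → z →Q→ k' → y
      have hk'Kyx : k' ∈ K.erase y := Finset.mem_erase.mpr ⟨hk'y, hk'K⟩
      obtain ⟨CP, hCPpath, hCPlen, hCPsupp⟩ :=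
        exists_cliquePath (r-2) ((K.erase y).erase k')
          (by rw [Finset.card_erase_of_mem hk'Kyx, Finset.card_erase_of_mem hyK, hKcard]; omega)
          (fun a ha b hb hab => hclq a (Finset.mem_of_mem_erase (Finset.mem_of_mem_erase ha))
            b (Finset.mem_of_mem_erase (Finset.mem_of_mem_erase hb)) hab)
          x s (Finset.mem_erase.mpr ⟨Ne.symm hk'x, Finset.mem_erase.mpr ⟨hxy, hxK⟩⟩)
          (Finset.mem_erase.mpr ⟨Ne.symm hk's, Finset.mem_erase.mpr ⟨hsy, hsK⟩⟩) (Ne.symm hsx)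
      have hadjk'y : H.Adj k' y := hclq k' hk'K y hyK hk'y
      have hyQ : y ∉ Q.support := fun hmem => hk'y ((hQfirst y hmem hyK).symm)
      have hinner1 : (Q.append (Walk.cons hadjk'y Walk.nil)).IsPath := by
        apply Walk.isPath_append_of_disj hQpath
        · rw [Walk.cons_isPath_iff]
          exact ⟨Walk.IsPath.nil, by simpa using hk'y⟩
        · intro t htq htc
          simp only [support_cons, support_nil, List.mem_cons] at htc
          rcases htc with rfl | rfl | h
          · rfl
          · exact absurd htq hyQ
          · simp at h
      have hsupp1 : (Q.append (Walk.cons hadjk'y Walk.nil)).support = Q.support ++ [y] := by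
        rw [support_append, support_cons, support_nil]
        rfl
      refine ⟨CP.append (Walk.cons hsz (Q.append (Walk.cons hadjk'y Walk.nil))), ?_, ?_⟩
      · apply Walk.isPath_append_of_disj hCPpath
        · rw [Walk.cons_isPath_iff]
          refine ⟨hinner1, ?_⟩
          rw [hsupp1, List.mem_append, List.mem_singleton]
          rintro (hmem | rfl)
          · exact hsQ hmem
          · exact hsy rfl
        · intro t htc htq
          have htK := (hCPsupp t).mp htc
          rw [Finset.mem_erase, Finset.mem_erase] at htK
          rw [support_cons, List.mem_cons, hsupp1, List.mem_append, List.mem_singleton] at htq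
          rcases htq with rfl | hmem | rfl
          · rfl
          · exact absurd (hQfirst t hmem htK.2.2) htK.1
          · exact absurd rfl htK.2.1
      · rw [length_append, length_cons, length_append, length_cons, length_nil]
        rw [Finset.card_erase_of_mem hk'Kyx, Finset.card_erase_of_mem hyK, hKcard] at hCPlen
        omega

end SimpleGraph

namespace SimpleGraph
open Walk
variable {V : Type*} [DecidableEq V]

lemma build_C {H : SimpleGraph V} {K : Finset V} {r : ℕ} (hKcard : K.card = r)
    (hclq : ∀ a ∈ K, ∀ b ∈ K, a ≠ b → H.Adj a b) (hr3 : 3 ≤ r)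
    {x y s z : V} (W : H.Walk x y) (hW : W.IsPath) (hzW : z ∈ W.support)
    (hxK : x ∈ K) (hyK : y ∈ K) (hxy : x ≠ y)
    (hsK : s ∈ K) (hsx : s ≠ x) (hsy : s ≠ y) (hzK : z ∉ K) (hsz : H.Adj s z) :
    ∃ X : H.Walk x y, X.IsPath ∧ r ≤ X.length := by
  have hWapath : (W.takeUntil z hzW).reverse.IsPath := (hW.takeUntil hzW).reverse
  have hWbpath : (W.dropUntil z hzW).IsPath := hW.dropUntil hzW
  obtain ⟨ka, Ra, RemA, hkaK, happA, hfirstA⟩ :=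
    (W.takeUntil z hzW).reverse.exists_firstHit (· ∈ K)
      ⟨x, by rw [support_reverse, List.mem_reverse]; exact (W.takeUntil z hzW).start_mem_support, hxK⟩
  obtain ⟨kb, Rb, RemB, hkbK, happB, hfirstB⟩ :=
    (W.dropUntil z hzW).exists_firstHit (· ∈ K)
      ⟨y, (W.dropUntil z hzW).end_mem_support, hyK⟩
  have hRapath : Ra.IsPath := by
    rw [← happA] at hWapath; exact Walk.isPath_of_append_left hWapath
  have hRbpath : Rb.IsPath := by
    rw [← happB] at hWbpath; exact Walk.isPath_of_append_left hWbpath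
  have hkane : ka ≠ kb := by
    intro heq
    have hkaWa : ka ∈ (W.takeUntil z hzW).support := by
      have : ka ∈ (W.takeUntil z hzW).reverse.support := by
        rw [← happA]
        rw [mem_support_append_iff]
        exact Or.inl Ra.end_mem_support
      rwa [support_reverse, List.mem_reverse] at this
    have hkbWb : kb ∈ (W.dropUntil z hzW).support := by
      rw [← happB, mem_support_append_iff]
      exact Or.inl Rb.end_mem_support
    rw [← heq] at hkbWb
    have := Walk.mem_takeUntil_mem_dropUntil_eq hW hzW hkaWa hkbWb
    exact hzK (this ▸ hkaK)
  by_cases hkas : ka = s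
  · -- use the b-side
    have hkbs : kb ≠ s := fun h => hkane (hkas.trans h.symm)
    exact build_C_core hKcard hclq hr3 hxK hyK hxy hsK hsx hsy hzK hsz
      Rb hRbpath hkbK hkbs hfirstB
  · exact build_C_core hKcard hclq hr3 hxK hyK hxy hsK hsx hsy hzK hsz
      Ra hRapath hkaK hkas hfirstA

lemma clique_case [Fintype V] {H : SimpleGraph V} [DecidableRel H.Adj]
    {r : ℕ} {v : Fin r → V} (hv : Function.Injective v)
    (hdeg : ∀ i, r ≤ H.degree (v i))
    (hclq : ∀ i j : Fin r, v i ≠ v j → H.Adj (v i) (v j))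
    (hr3 : 3 ≤ r)
    {x y : V} (hxy : x ≠ y)
    (q1 : H.Walk x y) (q2 : H.Walk y x) (h1 : q1.IsPath) (h2 : q2.IsPath)
    (hcover : ∀ z, z ∈ q1.support ∨ z ∈ q2.support) :
    ∃ Q : H.Walk x y, Q.IsPath ∧ r ≤ Q.length := by
  set K : Finset V := Finset.image v Finset.univ with hKdef
  have hKcard : K.card = r := by
    rw [hKdef, Finset.card_image_of_injective _ hv, Finset.card_univ, Fintype.card_fin]
  have hmemK : ∀ a, a ∈ K ↔ ∃ i, v i = a := by
    intro a
    simp [hKdef]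
  have hclqK : ∀ a ∈ K, ∀ b ∈ K, a ≠ b → H.Adj a b := by
    intro a ha b hb hab
    obtain ⟨i, rfl⟩ := (hmemK a).mp ha
    obtain ⟨j, rfl⟩ := (hmemK b).mp hb
    exact hclq i j hab
  by_cases hxK : x ∈ K <;> by_cases hyK : y ∈ K
  · -- both special
    have hcard2 : 1 ≤ ((K.erase x).erase y).card := by
      rw [Finset.card_erase_of_mem (Finset.mem_erase.mpr ⟨Ne.symm hxy, hyK⟩),
          Finset.card_erase_of_mem hxK, hKcard]
      omega
    obtain ⟨s, hs⟩ := Finset.card_pos.mp (show 0 < ((K.erase x).erase y).card by omega)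
    obtain ⟨hsy, hsx, hsK⟩ :  s ≠ y ∧ s ≠ x ∧ s ∈ K := by
      have h := Finset.mem_erase.mp hs
      have h' := Finset.mem_erase.mp h.2
      exact ⟨h.1, h'.1, h'.2⟩
    have hz : ∃ z, H.Adj s z ∧ z ∉ K := by
      by_contra hno
      push_neg at hno
      have hsub : H.neighborFinset s ⊆ K.erase s := by
        intro t ht
        rw [mem_neighborFinset] at ht
        exact Finset.mem_erase.mpr ⟨(ht.ne).symm, hno t ht⟩
      have hle := Finset.card_le_card hsub
      rw [Finset.card_erase_of_mem hsK, hKcard] at hle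
      obtain ⟨i, rfl⟩ := (hmemK s).mp hsK
      have := hdeg i
      rw [degree] at this
      omega
    obtain ⟨z, hsz, hzK⟩ := hz
    rcases hcover z with hzW | hzW
    · exact build_C hKcard hclqK hr3 q1 h1 hzW hxK hyK hxy hsK hsx hsy hzK hsz
    · have hzW' : z ∈ q2.reverse.support := by
        rw [support_reverse, List.mem_reverse]; exact hzW
      exact build_C hKcard hclqK hr3 q2.reverse h2.reverse hzW' hxK hyK hxy hsK hsx hsy hzK hsz
  · -- x special, y not: apply build_B to a walk from y to x, then reverse
    have hone : 1 ≤ (K.erase x).card := by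
      rw [Finset.card_erase_of_mem hxK, hKcard]; omega
    obtain ⟨k0, hk0⟩ := Finset.card_pos.mp (show 0 < (K.erase x).card by omega)
    obtain ⟨hk0x, hk0K⟩ := Finset.mem_erase.mp hk0
    have : ∃ Q : H.Walk y x, Q.IsPath ∧ r ≤ Q.length := by
      rcases hcover k0 with hk0W | hk0W
      · exact build_B hKcard hclqK q1.reverse h1.reverse hyK hxK
          ⟨k0, hk0K, hk0x, by rw [support_reverse, List.mem_reverse]; exact hk0W⟩
      · exact build_B hKcard hclqK q2 h2 hyK hxK ⟨k0, hk0K, hk0x, hk0W⟩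
    obtain ⟨Q, hQ, hQl⟩ := this
    exact ⟨Q.reverse, hQ.reverse, by rwa [length_reverse]⟩
  · -- y special, x not
    have hone : 1 ≤ (K.erase y).card := by
      rw [Finset.card_erase_of_mem hyK, hKcard]; omega
    obtain ⟨k0, hk0⟩ := Finset.card_pos.mp (show 0 < (K.erase y).card by omega)
    obtain ⟨hk0y, hk0K⟩ := Finset.mem_erase.mp hk0
    rcases hcover k0 with hk0W | hk0W
    · exact build_B hKcard hclqK q1 h1 hxK hyK ⟨k0, hk0K, hk0y, hk0W⟩
    · exact build_B hKcard hclqK q2.reverse h2.reverse hxK hyK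
        ⟨k0, hk0K, hk0y, by rw [support_reverse, List.mem_reverse]; exact hk0W⟩
  · -- neither special
    set K1 := K.filter (· ∈ q1.support) with hK1def
    set K2 := K.filter (· ∈ q2.support) with hK2def
    have hKsub : K ⊆ K1 ∪ K2 := by
      intro a ha
      rcases hcover a with h | h
      · exact Finset.mem_union_left _ (Finset.mem_filter.mpr ⟨ha, h⟩)
      · exact Finset.mem_union_right _ (Finset.mem_filter.mpr ⟨ha, h⟩)
    have hsum : r ≤ K1.card + K2.card := by
      calc r = K.card := hKcard.symm
      _ ≤ (K1 ∪ K2).card := Finset.card_le_card hKsub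
      _ ≤ K1.card + K2.card := Finset.card_union_le _ _
    by_cases h2K1 : 2 ≤ K1.card
    · obtain ⟨a, ha, b, hb, hab⟩ := Finset.one_lt_card.mp (show 1 < K1.card by omega)
      obtain ⟨haK, haW⟩ := Finset.mem_filter.mp ha
      obtain ⟨hbK, hbW⟩ := Finset.mem_filter.mp hb
      exact build_A hKcard hclqK q1 h1 hxK hyK ⟨a, b, haK, hbK, hab, haW, hbW⟩
    · have h2K2 : 2 ≤ K2.card := by omega
      obtain ⟨a, ha, b, hb, hab⟩ := Finset.one_lt_card.mp (show 1 < K2.card by omega)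
      obtain ⟨haK, haW⟩ := Finset.mem_filter.mp ha
      obtain ⟨hbK, hbW⟩ := Finset.mem_filter.mp hb
      refine build_A hKcard hclqK q2.reverse h2.reverse hxK hyK
        ⟨a, b, haK, hbK, hab, ?_, ?_⟩ <;>
      · rw [support_reverse, List.mem_reverse]; assumption
end SimpleGraph

namespace SimpleGraph
open Walk
variable {V : Type*} [Fintype V] [DecidableEq V]

lemma degree_le_of_le' {H H' : SimpleGraph V} [DecidableRel H.Adj] [DecidableRel H'.Adj]
    (h : H ≤ H') (a : V) : H.degree a ≤ H'.degree a := by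
  apply Finset.card_le_card
  intro t ht
  rw [mem_neighborFinset] at ht ⊢
  exact h ht

lemma key_lemma : ∀ (m : ℕ) (H : SimpleGraph V) (instH : DecidableRel H.Adj)
    (r : ℕ) (v : Fin r → V),
    Fintype.card (Sym2 V) - H.edgeSet.ncard ≤ m →
    Function.Injective v → (∀ i, r ≤ H.degree (v i)) → H.IsHamiltonian →
    ∀ x y : V, x ≠ y → ∃ p : H.Walk x y, p.IsPath ∧ r ≤ p.length := by
  intro m
  induction m using Nat.strong_induction_on with
  | _ m IH =>
    intro H instH r v hm hv hdeg hham x y hxy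
    classical
    by_cases hex : ∃ p : H.Walk x y, p.IsPath ∧ r ≤ p.length
    · exact hex
    exfalso
    have hbad : ∀ Q : H.Walk x y, Q.IsPath → Q.length < r := by
      intro Q hQ
      by_contra hge
      exact hex ⟨Q, hQ, by omega⟩
    have hnontriv : Nontrivial V := ⟨x, y, hxy⟩
    have hcard1 : Fintype.card V ≠ 1 := Fintype.one_lt_card.ne'
    obtain ⟨a, c, hc⟩ := hham hcard1
    obtain ⟨q1, q2, h1, h2, hlen, hcover, hinter⟩ := arc_split hxy c hc
    have hq1 : q1.length < r := hbad q1 h1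
    have hq2 : q2.length < r := by
      have := hbad q2.reverse h2.reverse
      rwa [length_reverse] at this
    set n := Fintype.card V with hn
    have hn3 : 3 ≤ n := by
      have h3 := hc.isCycle.three_le_length
      have hceq : c.length = n := hc.length_eq
      omega
    have hr3 : 3 ≤ r := by omega
    by_cases hclq : ∀ i j : Fin r, v i ≠ v j → H.Adj (v i) (v j)
    · obtain ⟨Q, hQ, hQl⟩ := clique_case hv hdeg hclq hr3 hxy q1 q2 h1 h2 hcover
      have := hbad Q hQ
      omega
    · push_neg at hclq
      obtain ⟨i, j, hne, hnadj⟩ := hclq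
      set s := v i with hsdef
      set s' := v j with hs'def
      set H' := H ⊔ fromEdgeSet {s(s, s')} with hH'def
      have hHle : H ≤ H' := le_sup_left
      haveI instH' : DecidableRel H'.Adj := Classical.decRel _
      have hH'ham : H'.IsHamiltonian := IsHamiltonian.mono hHle hham
      have hH'deg : ∀ i, r ≤ H'.degree (v i) :=
        fun i => le_trans (hdeg i) (degree_le_of_le' hHle _)
      have hediag : ¬ (s(s,s') : Sym2 V).IsDiag := by
        rw [Sym2.isDiag_iff_proj_eq]
        exact hne
      have hedgeset : H'.edgeSet = insert s(s,s') H.edgeSet := by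
        rw [hH'def, edgeSet_sup, edgeSet_fromEdgeSet]
        ext e
        simp only [Set.mem_union, Set.mem_insert_iff, Set.mem_diff, Set.mem_singleton_iff]
        constructor
        · rintro (h | ⟨rfl, _⟩)
          · exact Or.inr h
          · exact Or.inl rfl
        · rintro (rfl | h)
          · exact Or.inr ⟨rfl, hediag⟩
          · exact Or.inl h
      have hnotmem : s(s,s') ∉ H.edgeSet := by
        rw [mem_edgeSet]; exact hnadj
      have hcardE : H'.edgeSet.ncard = H.edgeSet.ncard + 1 := by
        rw [hedgeset, Set.ncard_insert_of_notMem hnotmem]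
      have hEbound : H'.edgeSet.ncard ≤ Fintype.card (Sym2 V) := by
        have hb := Set.ncard_le_ncard (Set.subset_univ H'.edgeSet) Set.finite_univ
        rwa [Set.ncard_univ, Nat.card_eq_fintype_card] at hb
      have hm' : Fintype.card (Sym2 V) - H'.edgeSet.ncard < m := by omega
      obtain ⟨Q, hQpath, hQlen⟩ :=
        IH (Fintype.card (Sym2 V) - H'.edgeSet.ncard) hm' H' instH' r v le_rfl hv hH'deg
          hH'ham x y hxy
      by_cases hQe : s(s,s') ∈ Q.edges
      · have hsub : H'.edgeSet ⊆ insert s(s,s') H.edgeSet := le_of_eq hedgeset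
        rcases split_at_edge hsub Q hQpath hQe with
          ⟨P1, P2, hp1, hp2, hdisj, hlen12, _, _⟩ | ⟨P1, P2, hp1, hp2, hdisj, hlen12, _, _⟩
        · refine ore_contradiction P1 P2 hp1 hp2 hdisj hnadj hbad (by omega) ?_
          have hd1 := hdeg i
          have hd2 := hdeg j
          rw [← hsdef] at hd1
          rw [← hs'def] at hd2
          omega
        · refine ore_contradiction P1 P2 hp1 hp2 hdisj (fun h => hnadj h.symm) hbad (by omega) ?_
          have hd1 := hdeg i
          have hd2 := hdeg j
          rw [← hsdef] at hd1
          rw [← hs'def] at hd2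
          omega
      · have hQsub : ∀ e ∈ Q.edges, e ∈ H.edgeSet := by
          intro e he
          have hmem := Q.edges_subset_edgeSet he
          rw [hedgeset] at hmem
          rcases Set.mem_insert_iff.mp hmem with rfl | h
          · exact absurd he hQe
          · exact h
        have := hbad (Q.transfer H hQsub) (hQpath.transfer _)
        rw [length_transfer] at this
        omega

end SimpleGraph


/-- If `G` is hamiltonian and contains `r` distinct vertices each of degree at least
`r`, then any two (distinct) vertices of `G` are joined by a path of length at
least `r`. -/
theorem hamiltonian_long_path_between_vertices
    {V : Type*} [Fintype V] [DecidableEq V] (G : SimpleGraph V) [DecidableRel G.Adj]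
    (hG : G.IsHamiltonian) (r : ℕ) (v : Fin r → V) (hv : Function.Injective v)
    (hdeg : ∀ i, r ≤ G.degree (v i)) :
    ∀ x y : V, x ≠ y → ∃ p : G.Walk x y, p.IsPath ∧ r ≤ p.length := by
  intro x y hxy
  exact SimpleGraph.key_lemma (Fintype.card (Sym2 V) - G.edgeSet.ncard) G inferInstance r v
    le_rfl hv hdeg hG x y hxy
end
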